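/- arXiv:2107.07202 — 6 statements merged into one kernel-verified Lean document; each statement's English description precedes it below -/
import Mathlib

section
/- Suppose V_{χ^t} ⊗ V_i ≅ V_i as kG-modules for some i ∈ I and some nonzero integer t (equivalently, σ^t(i) = i with t ≠ 0). Then χ has finite order in the character group of G. -/
/-! Taking determinants in `f⁻¹ ∘ ρ g ∘ f = χ(g)^t • ρ g` gives `χ(g)^(t · dim V) = 1` for every `g`,
and `t · dim V ≠ 0` because a simple module is nonzero. -/

open scoped TensorProduct

namespace HopfOrePaper

/-- A representation of `G` on `V` is simple (irreducible): `V ≠ 0` and the only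
`G`-stable subspaces are `0` and `V`. -/
def IsSimpleRep {k G V : Type} [Field k] [Group G] [AddCommGroup V] [Module k V]
    (ρ : Representation k G V) : Prop :=
  Nontrivial V ∧ ∀ p : Submodule k V, (∀ g : G, ∀ v ∈ p, ρ g v ∈ p) → p = ⊥ ∨ p = ⊤

/-- Isomorphism of representations. -/
def RepIso {k G V V' : Type} [Field k] [Group G] [AddCommGroup V] [Module k V]
    [AddCommGroup V'] [Module k V'] (ρ : Representation k G V)
    (ρ' : Representation k G V') : Prop :=
  ∃ f : V ≃ₗ[k] V', ∀ (g : G) (v : V), f (ρ g v) = ρ' g (f v)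

/-- `IsTwistIso χ t ρ ρ'` says that `ρ' ≅ V_{χ^t} ⊗ ρ` as representations of `G`. -/
def IsTwistIso {k G V V' : Type} [Field k] [Group G] [AddCommGroup V] [Module k V]
    [AddCommGroup V'] [Module k V'] (χ : G →* kˣ) (t : ℤ)
    (ρ : Representation k G V) (ρ' : Representation k G V') : Prop :=
  ∃ f : V ≃ₗ[k] V', ∀ (g : G) (v : V), ρ' g (f v) = ((χ g ^ t : kˣ) : k) • f (ρ g v)

/-- `ρ` and `ρ'` lie in the same class of the equivalence `∼` on simple modules,
i.e. `ρ' ≅ V_{χ^t} ⊗ ρ` for some `t ∈ ℤ` (i.e. `[i] = [j]`). -/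
def TwistEquiv {k G V V' : Type} [Field k] [Group G] [AddCommGroup V] [Module k V]
    [AddCommGroup V'] [Module k V'] (χ : G →* kˣ)
    (ρ : Representation k G V) (ρ' : Representation k G V') : Prop :=
  ∃ t : ℤ, IsTwistIso χ t ρ ρ'

/-- A presentation of the Hopf–Ore extension `H = kG(χ⁻¹, a, 0)`:
`H` is a `k`-algebra containing the group algebra `kG` and an element `x` with
`x·g = χ⁻¹(g)·g·x`, and with `k`-basis `{g xⁱ | g ∈ G, i ∈ ℕ}`. -/
structure HopfOre (k G H : Type) [Field k] [Group G] [Ring H] [Algebra k H]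
    (χ : G →* kˣ) : Type where
  emb : MonoidAlgebra k G →ₐ[k] H
  x : H
  comm_rel : ∀ g : G, x * emb (MonoidAlgebra.of k G g)
      = (((χ g)⁻¹ : kˣ) : k) • (emb (MonoidAlgebra.of k G g) * x)
  basis_li : LinearIndependent k fun p : G × ℕ => emb (MonoidAlgebra.of k G p.1) * x ^ p.2
  basis_span :
    Submodule.span k (Set.range fun p : G × ℕ => emb (MonoidAlgebra.of k G p.1) * x ^ p.2) = ⊤

variable {k G H : Type} [Field k] [Group G] [Ring H] [Algebra k H] {χ : G →* kˣ}

/-- `IsStdQuot HO ρ e c d` says that the `H`-module `W` is (a copy of) the quotient module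
`M(V)/cM(V)` of `M(V) = H ⊗_{kG} V`, where `c` is a (central) polynomial in `x` of degree `d`
(of the form `x^t` or `(x^s - β)^r`): `e` is a `kG`-equivariant embedding of `V` into `W`,
`c` annihilates `W`, and `W = ⊕_{j=0}^{d-1} xʲ·e(V)`. -/
structure IsStdQuot (HO : HopfOre k G H χ) {V W : Type}
    [AddCommGroup V] [Module k V]
    [AddCommGroup W] [Module k W] [Module H W] [IsScalarTower k H W]
    (ρ : Representation k G V) (e : V →ₗ[k] W) (c : H) (d : ℕ) : Prop where
  equivariant : ∀ (g : G) (v : V), e (ρ g v) = HO.emb (MonoidAlgebra.of k G g) • e v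
  ann : ∀ w : W, c • w = 0
  xbasis : Function.Bijective fun f : Fin d → V => ∑ j : Fin d, HO.x ^ (j : ℕ) • e (f j)

/-- A witness exhibiting the `H`-module `W` as a standard quotient module
`M(V_i)/cM(V_i)` for some finite-dimensional simple `kG`-module `V_i`. -/
structure StdWitness (HO : HopfOre k G H χ) (W : Type)
    [AddCommGroup W] [Module k W] [Module H W] [IsScalarTower k H W]
    (c : H) (d : ℕ) : Type 1 where
  V : Type
  [acg : AddCommGroup V]
  [modk : Module k V]
  ρ : Representation k G V
  fin : FiniteDimensional k V
  simple : IsSimpleRep ρ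
  e : V →ₗ[k] W
  std : IsStdQuot HO ρ e c d

/-- The representation of `G` obtained from an `H`-module by restriction along
`kG → H`. -/
noncomputable def resRep (HO : HopfOre k G H χ) (M : Type) [AddCommGroup M] [Module k M]
    [Module H M] [IsScalarTower k H M] : Representation k G M where
  toFun g :=
    { toFun := fun m => HO.emb (MonoidAlgebra.of k G g) • m
      map_add' := fun m n => smul_add _ m n
      map_smul' := fun c m => by
        simp only [RingHom.id_apply]
        exact (smul_comm c (HO.emb (MonoidAlgebra.of k G g)) m).symm }
  map_one' := by
    ext m
    simp only [LinearMap.coe_mk, AddHom.coe_mk, LinearMap.id_coe, id_eq, Module.End.one_apply]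
    rw [map_one, map_one, one_smul]
  map_mul' g h := by
    ext m
    simp only [LinearMap.coe_mk, AddHom.coe_mk, Module.End.mul_apply]
    rw [map_mul, map_mul, mul_smul]

/-- A module over a ring is indecomposable. -/
def IsIndecomposableMod (R M : Type) [Ring R] [AddCommGroup M] [Module R M] : Prop :=
  Nontrivial M ∧ ∀ p q : Submodule R M, IsCompl p q → p = ⊥ ∨ q = ⊥

/-- A module is uniserial if its submodules form a chain. -/
def IsUniserial (R M : Type) [Ring R] [AddCommGroup M] [Module R M] : Prop :=
  ∀ p q : Submodule R M, p ≤ q ∨ q ≤ p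

/-- The radical of a module: the intersection of its maximal submodules. -/
def modRadical (R M : Type) [Ring R] [AddCommGroup M] [Module R M] : Submodule R M :=
  sInf {p : Submodule R M | IsCoatom p}

/-- The socle of a module: the sum of its simple submodules. -/
def modSocle (R M : Type) [Ring R] [AddCommGroup M] [Module R M] : Submodule R M :=
  sSup {p : Submodule R M | IsAtom p}

/-- The radical series `M ⊇ rad M ⊇ rad² M ⊇ ⋯` of a module. -/
noncomputable def radIter (R M : Type) [Ring R] [AddCommGroup M] [Module R M] :
    ℕ → Submodule R M
  | 0 => ⊤
  | j + 1 => Submodule.map (radIter R M j).subtype (modRadical R (radIter R M j))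

/-- The submodule `c•M` of a module `M` (for `c` a central, or normalizing, element). -/
def smulRange {M : Type} (R : Type) [Ring R] [AddCommGroup M] [Module R M] (c : R) :
    Submodule R M :=
  Submodule.span R (Set.range fun m : M => c • m)

/-- The subquotient `q/p` associated with submodules `p ≤ q`. -/
abbrev sectionQuot {R M : Type} [Ring R] [AddCommGroup M] [Module R M]
    (p q : Submodule R M) :=
  ↥q ⧸ (Submodule.comap q.subtype p)

/-- The hypothesis that a given `H`-module structure on `M ⊗[k] N` is the one obtained
from the `H`-module structures of `M` and `N` via the comultiplication of
`H = kG(χ⁻¹,a,0)`, i.e. `Δ(g) = g ⊗ g` and `Δ(x) = x ⊗ a + 1 ⊗ x`. -/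
structure TensorAct (HO : HopfOre k G H χ) (a : G) (M N : Type)
    [AddCommGroup M] [Module k M] [Module H M] [IsScalarTower k H M]
    [AddCommGroup N] [Module k N] [Module H N] [IsScalarTower k H N]
    [Module H (M ⊗[k] N)] [IsScalarTower k H (M ⊗[k] N)] : Prop where
  g_tmul : ∀ (g : G) (m : M) (n : N),
    HO.emb (MonoidAlgebra.of k G g) • (m ⊗ₜ[k] n)
      = (HO.emb (MonoidAlgebra.of k G g) • m) ⊗ₜ[k] (HO.emb (MonoidAlgebra.of k G g) • n)
  x_tmul : ∀ (m : M) (n : N),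
    HO.x • (m ⊗ₜ[k] n)
      = (HO.x • m) ⊗ₜ[k] (HO.emb (MonoidAlgebra.of k G a) • n) + m ⊗ₜ[k] (HO.x • n)

/-- The twist of a representation by the `t`-th power of a character: this is the
representation `V_{χ^t} ⊗ ρ`, realized on the same space (`σ^t` applied to `ρ`). -/
def twistRep {k G V : Type} [Field k] [Group G] [AddCommGroup V] [Module k V]
    (χ : G →* kˣ) (t : ℤ) (ρ : Representation k G V) : Representation k G V where
  toFun g := ((χ g ^ t : kˣ) : k) • ρ g
  map_one' := by simp
  map_mul' g h := by
    ext v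
    simp only [map_mul, mul_zpow, Units.val_mul, LinearMap.smul_apply, Module.End.mul_apply,
      map_smul, smul_smul, mul_comm]

/-- The one-dimensional representation attached to a linear character. -/
def charRep (k : Type) {G : Type} [Field k] [Group G] (μ : G →* kˣ) :
    Representation k G k where
  toFun g := ((μ g : k) • LinearMap.id)
  map_one' := by
    simp only [map_one, Units.val_one, one_smul]
    rfl
  map_mul' g h := by
    ext
    simp [mul_smul, mul_comm]

/-- `SubRepIso ρT p ρ` : `p` is a `G`-stable subspace of the representation `ρT`
and, as a representation of `G`, it is isomorphic to `ρ`. -/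
def SubRepIso {k G X V : Type} [Field k] [Group G] [AddCommGroup X] [Module k X]
    [AddCommGroup V] [Module k V]
    (ρT : Representation k G X) (p : Submodule k X) (ρ : Representation k G V) : Prop :=
  (∀ g : G, ∀ y ∈ p, ρT g y ∈ p) ∧
  ∃ f : V ≃ₗ[k] ↥p, ∀ (g : G) (v : V), (f (ρ g v) : X) = ρT g (f v)

theorem _root_.LinearMap.pow_finrank_eq_one_of_conj_eq_smul {A M : Type*} [CommRing A]
    [AddCommGroup M] [Module A M] [Module.Free A M] {φ : M →ₗ[A] M} (hφ : IsUnit φ)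
    (e : M ≃ₗ[A] M) {c : A} (h : e ∘ₗ φ ∘ₗ e.symm = c • φ) :
    c ^ Module.finrank A M = 1 := by
  have hdet := congrArg LinearMap.det h
  rw [LinearMap.det_conj, LinearMap.det_smul] at hdet
  exact ((LinearMap.isUnit_det φ hφ).mul_eq_right).mp hdet.symm

theorem IsTwistIso.zpow_mul_finrank_eq_one {k G V : Type} [Field k] [Group G]
    [AddCommGroup V] [Module k V] [FiniteDimensional k V] {χ : G →* kˣ} {t : ℤ}
    {ρ : Representation k G V} (h : IsTwistIso χ t ρ ρ) (g : G) :
    χ g ^ (t * Module.finrank k V) = 1 := by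
  obtain ⟨f, hf⟩ := h
  have hconj : f.symm ∘ₗ ρ g ∘ₗ f.symm.symm = ((χ g ^ t : kˣ) : k) • ρ g := by
    ext v
    simp [hf]
  have hpow := LinearMap.pow_finrank_eq_one_of_conj_eq_smul (ρ.asGroupHom g).isUnit f.symm hconj
  ext
  rw [zpow_mul, zpow_natCast, Units.val_pow_eq_pow_val, hpow, Units.val_one]

theorem stmt_0_general {k G V : Type} [Field k] [Group G]
    [AddCommGroup V] [Module k V] [FiniteDimensional k V]
    (χ : G →* kˣ)
    (ρ : Representation k G V) (hρ : IsSimpleRep ρ)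
    (t : ℤ) (ht : t ≠ 0) (hiso : IsTwistIso χ t ρ ρ) :
    IsOfFinOrder χ := by
  have : Nontrivial V := hρ.1
  have hn : Module.finrank k V ≠ 0 := Module.finrank_pos.ne'
  refine (isOfFinOrder_iff_zpow_eq_one (x := χ)).mpr ⟨t * Module.finrank k V, by simp [ht, hn], ?_⟩
  ext g : 1
  simpa [MonoidHom.zpow_apply] using hiso.zpow_mul_finrank_eq_one g

/-- **Lemma 3.1.** If `V_{χ^t} ⊗ V_i ≅ V_i` as `kG`-modules for some simple
finite-dimensional `kG`-module `V_i` and some nonzero integer `t` (i.e. `σ^t(i) = i`),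
then `χ` has finite order in the character group of `G`. -/
theorem stmt_0 {k G V : Type} [Field k] [IsAlgClosed k] [Group G]
    [AddCommGroup V] [Module k V] [FiniteDimensional k V]
    (χ : G →* kˣ) (a : G) (ha : a ∈ Subgroup.center G) (hχa : χ a ≠ 1)
    (ρ : Representation k G V) (hρ : IsSimpleRep ρ)
    (t : ℤ) (ht : t ≠ 0) (hiso : IsTwistIso χ t ρ ρ) :
    IsOfFinOrder χ :=
  stmt_0_general χ ρ hρ t ht hiso

end HopfOrePaper
end

section
/- If there exists a nonzero finite dimensional x-torsionfree H-module, then χ has finite order in the character group of G. -/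
/-!
Torsionfreeness makes `x` act invertibly on the finite-dimensional module `M`, and so does
every `g ∈ G`. Taking determinants in `x g = χ(g)⁻¹ g x` on `M` gives `χ(g)^(dim M) = 1`
for all `g`, so `χ^(dim M) = 1`.
-/

open scoped TensorProduct

namespace HopfOrePaper

variable {k G H : Type} [Field k] [Group G] [Ring H] [Algebra k H] {χ : G →* kˣ}

theorem _root_.LinearMap.pow_finrank_eq_one_of_comp_eq_smul_comp {R M : Type*} [CommRing R]
    [AddCommGroup M] [Module R M] [Module.Free R M] {f g : M →ₗ[R] M} (hf : IsUnit f)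
    (hg : IsUnit g) {c : R} (h : f ∘ₗ g = c • (g ∘ₗ f)) : c ^ Module.finrank R M = 1 := by
  have hdet := congrArg LinearMap.det h
  rw [LinearMap.det_comp, LinearMap.det_smul, LinearMap.det_comp, mul_comm (LinearMap.det g),
    eq_comm] at hdet
  exact ((LinearMap.isUnit_det f hf).mul (LinearMap.isUnit_det g hg)).mul_eq_right.1 hdet

theorem HopfOre.toLinearMap_x_comp_resRep (HO : HopfOre k G H χ) (M : Type) [AddCommGroup M]
    [Module k M] [Module H M] [IsScalarTower k H M] (g : G) :
    DistribSMul.toLinearMap k M HO.x ∘ₗ resRep HO M g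
      = (((χ g)⁻¹ : kˣ) : k) • (resRep HO M g ∘ₗ DistribSMul.toLinearMap k M HO.x) := by
  ext m
  change HO.x • HO.emb (MonoidAlgebra.of k G g) • m
    = (((χ g)⁻¹ : kˣ) : k) • HO.emb (MonoidAlgebra.of k G g) • HO.x • m
  rw [← mul_smul, HO.comm_rel g, smul_assoc, mul_smul]

theorem stmt_2_general {k G H : Type} [Field k] [Group G] [Ring H] [Algebra k H]
    {χ : G →* kˣ}
    (HO : HopfOre k G H χ)
    (M : Type) [AddCommGroup M] [Module k M] [Module H M] [IsScalarTower k H M]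
    [FiniteDimensional k M] [Nontrivial M]
    (htf : ∀ m : M, HO.x • m = 0 → m = 0) :
    IsOfFinOrder χ := by
  have hx : IsUnit (DistribSMul.toLinearMap k M HO.x) :=
    (LinearMap.isUnit_iff_ker_eq_bot _).2 (LinearMap.ker_eq_bot'.2 htf)
  have hχ : ∀ g : G, χ g ^ Module.finrank k M = 1 := fun g => by
    have hinv := LinearMap.pow_finrank_eq_one_of_comp_eq_smul_comp hx
      ((Group.isUnit g).map (resRep HO M)) (HO.toLinearMap_x_comp_resRep M g)
    rwa [← Units.val_pow_eq_pow_val, Units.val_eq_one, inv_pow, inv_eq_one] at hinv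
  exact isOfFinOrder_iff_pow_eq_one.2 ⟨_, Module.finrank_pos, MonoidHom.ext hχ⟩

/-- **Lemma 3.3.** If there exists a nonzero finite-dimensional `x`-torsionfree module
over `H = kG(χ⁻¹, a, 0)`, then `χ` has finite order in the character group of `G`. -/
theorem stmt_2 {k G H : Type} [Field k] [IsAlgClosed k] [Group G] [Ring H] [Algebra k H]
    {χ : G →* kˣ} (a : G) (ha : a ∈ Subgroup.center G) (hχa : χ a ≠ 1)
    (HO : HopfOre k G H χ)
    (M : Type) [AddCommGroup M] [Module k M] [Module H M] [IsScalarTower k H M]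
    [FiniteDimensional k M] [Nontrivial M]
    (htf : ∀ m : M, HO.x • m = 0 → m = 0) :
    IsOfFinOrder χ :=
  stmt_2_general HO M htf

end HopfOrePaper
end

section
/- Assume |χ| = |q| = s < ∞. Let i, j ∈ I and α, β ∈ k^×. Then V(i,β) is a simple H-module, and V(i,β) ≅ V(j,α) as H-modules if and only if [i] = [j] and β = α. -/
/-!
By Schur's lemma the central element `a` acts on `V` by a scalar `ν ≠ 0`. Hence on
`V(i,β) = ⊕_{m<s} xᵐ·V` it acts by `qᵐν` on `xᵐ·V`; since `|q| = s` these scalars are distinct,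
so `xᵐ·V` is the full `qᵐν`-eigenspace. A nonzero submodule is `a`-stable, so it contains an
eigenvector `xᵐ·v`; because `xˢ = β ≠ 0` it then contains `v`, hence all of the simple module
`V`, hence everything.

An isomorphism `V(i,β) ≅ V(j,α)` commutes with `xˢ`, which forces `β = α`, and maps the
eigenspace `V` onto some `xᵐ·V'`, which gives `V' ≅ V_{χ⁻ᵐ} ⊗ V`. Conversely, `x` is invertible
on `V(i,β)`, so `xⁿ·V ≅ V_{χⁿ} ⊗ V` is another generating copy of `V`. Since `|χ| = s`, every
twist `V_{χᵗ} ⊗ V` arises in this way, and two such modules with isomorphic generating copies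
are isomorphic.
-/

open scoped TensorProduct

namespace HopfOrePaper

variable {k G H : Type} [Field k] [Group G] [Ring H] [Algebra k H] {χ : G →* kˣ}

theorem _root_.Submodule.exists_mem_hasEigenvector {K M : Type} [Field K] [IsAlgClosed K]
    [AddCommGroup M] [Module K M] [FiniteDimensional K M] {f : Module.End K M}
    {p : Submodule K M} (hp : ∀ x ∈ p, f x ∈ p) (hne : p ≠ ⊥) :
    ∃ μ, ∃ x ∈ p, f.HasEigenvector μ x := by
  have : Nontrivial p := Submodule.nontrivial_iff_ne_bot.mpr hne
  obtain ⟨μ, hμ⟩ := Module.End.exists_eigenvalue (f.restrict hp)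
  obtain ⟨x, hx⟩ := hμ.exists_hasEigenvector
  exact ⟨μ, x, x.2, Module.End.eigenspace_restrict_le_eigenspace f hp μ ⟨x, hx.1, rfl⟩,
    by simpa using hx.2⟩

theorem injective_units_pow_mul {K : Type} [Field K] {q : Kˣ} {d : ℕ} (hq : orderOf q = d)
    {c : K} (hc : c ≠ 0) : Function.Injective fun j : Fin d => ((q ^ (j : ℕ) : Kˣ) : K) * c := by
  intro i j h
  have hpow : q ^ (i : ℕ) = q ^ (j : ℕ) := Units.ext (mul_right_cancel₀ hc h)
  exact Fin.ext (pow_injOn_Iio_orderOf (by simp [hq]) (by simp [hq]) hpow)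

theorem IsSimpleRep.exists_smul_of_mem_center [IsAlgClosed k] {V : Type} [AddCommGroup V]
    [Module k V] [FiniteDimensional k V] {ρ : Representation k G V} (hρ : IsSimpleRep ρ)
    {a : G} (ha : a ∈ Subgroup.center G) : ∃ c : k, c ≠ 0 ∧ ∀ v, ρ a v = c • v := by
  have := hρ.1
  obtain ⟨c, hc⟩ := Module.End.exists_eigenvalue (ρ a)
  have hstable : ∀ g : G, ∀ v ∈ Module.End.eigenspace (ρ a) c,
      ρ g v ∈ Module.End.eigenspace (ρ a) c := by
    intro g v hv
    rw [Module.End.mem_eigenspace_iff] at hv ⊢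
    rw [← Module.End.mul_apply, ← map_mul, ← (Subgroup.mem_center_iff.mp ha g), map_mul,
      Module.End.mul_apply, hv, map_smul]
  have htop : Module.End.eigenspace (ρ a) c = ⊤ := (hρ.2 _ hstable).resolve_left hc
  have hsmul : ∀ v, ρ a v = c • v := fun v =>
    Module.End.mem_eigenspace_iff.mp (htop ▸ Submodule.mem_top)
  refine ⟨c, fun hc0 => ?_, hsmul⟩
  obtain ⟨v, hv⟩ := exists_ne (0 : V)
  apply hv
  rw [← Representation.inv_self_apply ρ a v, hsmul, hc0, zero_smul, map_zero]

section HopfOre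

variable (HO : HopfOre k G H χ)

theorem HopfOre.emb_mul_x (g : G) :
    HO.emb (MonoidAlgebra.of k G g) * HO.x
      = ((χ g : kˣ) : k) • (HO.x * HO.emb (MonoidAlgebra.of k G g)) := by
  rw [HO.comm_rel, smul_smul, ← Units.val_mul, mul_inv_cancel, Units.val_one, one_smul]

theorem HopfOre.emb_mul_x_pow (g : G) (n : ℕ) :
    HO.emb (MonoidAlgebra.of k G g) * HO.x ^ n
      = ((χ g ^ n : kˣ) : k) • (HO.x ^ n * HO.emb (MonoidAlgebra.of k G g)) := by
  induction n with
  | zero => simp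
  | succ n ih =>
    rw [pow_succ, ← mul_assoc, ih, smul_mul_assoc, mul_assoc, HO.emb_mul_x, mul_smul_comm,
      smul_smul, ← mul_assoc, pow_succ, Units.val_mul]

variable {W W' : Type} [AddCommGroup W] [Module k W] [Module H W] [IsScalarTower k H W]
  [AddCommGroup W'] [Module k W'] [Module H W'] [IsScalarTower k H W']

theorem HopfOre.emb_smul_x_pow_smul (g : G) (n : ℕ) (w : W) :
    HO.emb (MonoidAlgebra.of k G g) • HO.x ^ n • w
      = ((χ g ^ n : kˣ) : k) • HO.x ^ n • HO.emb (MonoidAlgebra.of k G g) • w := by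
  rw [← mul_smul, HO.emb_mul_x_pow, smul_assoc, mul_smul]

theorem HopfOre.map_smul_of_commute (Φ : W →ₗ[k] W') (hx : ∀ w, Φ (HO.x • w) = HO.x • Φ w)
    (hg : ∀ (g : G) (w : W), Φ (HO.emb (MonoidAlgebra.of k G g) • w)
      = HO.emb (MonoidAlgebra.of k G g) • Φ w)
    (h : H) (w : W) : Φ (h • w) = h • Φ w := by
  have hxn : ∀ (n : ℕ) (w : W), Φ (HO.x ^ n • w) = HO.x ^ n • Φ w := by
    intro n
    induction n with
    | zero => simp
    | succ n ih => intro w; rw [pow_succ', mul_smul, hx, ih, mul_smul]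
  have hh : h ∈ Submodule.span k (Set.range fun p : G × ℕ =>
      HO.emb (MonoidAlgebra.of k G p.1) * HO.x ^ p.2) := HO.basis_span ▸ Submodule.mem_top
  induction hh using Submodule.span_induction with
  | mem y hy =>
    obtain ⟨⟨g, n⟩, rfl⟩ := hy
    rw [mul_smul, hg, hxn, mul_smul]
  | zero => simp
  | add y z _ _ hy hz => rw [add_smul, map_add, hy, hz, add_smul]
  | smul c y _ hy => rw [smul_assoc, map_smul, hy, smul_assoc]

theorem HopfOre.map_mem_eigenspace_resRep (f : W ≃ₗ[H] W') {a : G} {μ : k} {w : W}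
    (hw : w ∈ Module.End.eigenspace (resRep HO W a) μ) :
    f w ∈ Module.End.eigenspace (resRep HO W' a) μ := by
  rw [Module.End.mem_eigenspace_iff] at hw ⊢
  change HO.emb (MonoidAlgebra.of k G a) • f w = μ • f w
  rw [← map_smul, ← LinearMapClass.map_smul_of_tower f μ w, ← hw]
  rfl

end HopfOre

namespace IsStdQuot

variable {HO : HopfOre k G H χ} {V V' W W' : Type} [AddCommGroup V] [Module k V]
  [AddCommGroup V'] [Module k V']
  [AddCommGroup W] [Module k W] [Module H W] [IsScalarTower k H W]
  [AddCommGroup W'] [Module k W'] [Module H W'] [IsScalarTower k H W']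
  {ρ : Representation k G V} {ρ' : Representation k G V'} {e : V →ₗ[k] W} {e' : V' →ₗ[k] W'}

noncomputable def equiv {c : H} {d : ℕ} (hW : IsStdQuot HO ρ e c d) : (Fin d → V) ≃ₗ[k] W :=
  LinearEquiv.ofBijective
    { toFun := fun f => ∑ j : Fin d, HO.x ^ (j : ℕ) • e (f j)
      map_add' := fun f f' => by
        simp only [Pi.add_apply, map_add, smul_add, Finset.sum_add_distrib]
      map_smul' := fun r f => by
        simp only [Pi.smul_apply, map_smul, RingHom.id_apply, Finset.smul_sum, smul_comm r] }
    hW.xbasis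

section

variable {c : H} {d : ℕ} (hW : IsStdQuot HO ρ e c d)
include hW

theorem equiv_apply (f : Fin d → V) : hW.equiv f = ∑ j : Fin d, HO.x ^ (j : ℕ) • e (f j) :=
  rfl

theorem equiv_single (j : Fin d) (v : V) : hW.equiv (Pi.single j v) = HO.x ^ (j : ℕ) • e v := by
  rw [hW.equiv_apply, Finset.sum_eq_single j
    (fun l _ hl => by rw [Pi.single_eq_of_ne hl, map_zero, smul_zero]) (by simp),
    Pi.single_eq_same]

theorem emb_smul_equiv (g : G) (f : Fin d → V) :
    HO.emb (MonoidAlgebra.of k G g) • hW.equiv f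
      = hW.equiv fun j => ((χ g ^ (j : ℕ) : kˣ) : k) • ρ g (f j) := by
  simp only [hW.equiv_apply, Finset.smul_sum, HO.emb_smul_x_pow_smul, ← hW.equivariant,
    map_smul]
  simp only [smul_comm _ (HO.x ^ _)]

theorem map_smul_of_forall {M : Type} [AddCommGroup M] [Module k M] [Module H M]
    [IsScalarTower k H M] {Φ : W →ₗ[k] M} {h : H}
    (hΦ : ∀ (j : Fin d) (v : V), Φ (h • HO.x ^ (j : ℕ) • e v) = h • Φ (HO.x ^ (j : ℕ) • e v))
    (w : W) : Φ (h • w) = h • Φ w := by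
  obtain ⟨f, rfl⟩ := hW.equiv.surjective w
  simp only [hW.equiv_apply, Finset.smul_sum, map_sum, hΦ]

theorem injective_x_pow_smul (j : Fin d) : Function.Injective fun v => HO.x ^ (j : ℕ) • e v := by
  have he : (fun v => HO.x ^ (j : ℕ) • e v) = hW.equiv ∘ Pi.single j :=
    funext fun v => (hW.equiv_single j v).symm
  exact he ▸ hW.equiv.injective.comp (Pi.single_injective _)

theorem injective (hd : 0 < d) : Function.Injective e := by
  simpa using hW.injective_x_pow_smul ⟨0, hd⟩

theorem finiteDimensional [FiniteDimensional k V] : FiniteDimensional k W :=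
  Module.Finite.equiv hW.equiv

theorem finrank_eq [FiniteDimensional k V] : Module.finrank k W = d * Module.finrank k V := by
  rw [← hW.equiv.finrank_eq, Module.finrank_pi_fintype]
  simp

theorem eq_top_of_apply_mem (hρ : IsSimpleRep ρ) {U : Submodule H W} {v : V} (hv : v ≠ 0) (h : e v ∈ U) : U = ⊤ := by
  let p : Submodule k V := (U.restrictScalars k).comap e
  have hstable : ∀ g : G, ∀ v ∈ p, ρ g v ∈ p := fun g v hv => by
    simp only [p, Submodule.mem_comap, Submodule.restrictScalars_mem, hW.equivariant] at hv ⊢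
    exact U.smul_mem _ hv
  have hp : p = ⊤ :=
    (hρ.2 p hstable).resolve_left fun hp => hv ((Submodule.eq_bot_iff p).mp hp v h)
  rw [eq_top_iff]
  rintro w -
  obtain ⟨f, rfl⟩ := hW.equiv.surjective w
  rw [hW.equiv_apply]
  exact U.sum_mem fun j _ => U.smul_mem _ (hp ▸ Submodule.mem_top : f j ∈ p)

theorem x_pow_smul_mem_eigenspace {a : G} {ν : k} (hν : ∀ v, ρ a v = ν • v) (n : ℕ) (v : V) :
    HO.x ^ n • e v ∈ Module.End.eigenspace (resRep HO W a) (((χ a ^ n : kˣ) : k) * ν) := by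
  rw [Module.End.mem_eigenspace_iff]
  change HO.emb (MonoidAlgebra.of k G a) • (HO.x ^ n • e v) = _
  rw [HO.emb_smul_x_pow_smul, ← hW.equivariant, hν, map_smul, smul_comm (HO.x ^ n) ν, smul_smul]

theorem equiv_symm_resRep_apply {a : G} {ν : k} (hν : ∀ v, ρ a v = ν • v) (w : W) (j : Fin d) :
    hW.equiv.symm (resRep HO W a w) j
      = (((χ a ^ (j : ℕ) : kˣ) : k) * ν) • hW.equiv.symm w j := by
  obtain ⟨f, rfl⟩ := hW.equiv.surjective w
  change hW.equiv.symm (HO.emb (MonoidAlgebra.of k G a) • hW.equiv f) j = _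
  rw [hW.emb_smul_equiv, LinearEquiv.symm_apply_apply, LinearEquiv.symm_apply_apply, hν,
    smul_smul]

theorem equiv_symm_eq_zero_of_mem_eigenspace {a : G} {ν μ : k} (hν : ∀ v, ρ a v = ν • v)
    {w : W} (hw : w ∈ Module.End.eigenspace (resRep HO W a) μ) {j : Fin d}
    (hj : ((χ a ^ (j : ℕ) : kˣ) : k) * ν ≠ μ) : hW.equiv.symm w j = 0 := by
  by_contra hne
  have h := hW.equiv_symm_resRep_apply hν w j
  rw [Module.End.mem_eigenspace_iff.mp hw, map_smul, Pi.smul_apply] at h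
  exact hj (smul_left_injective k hne h).symm

theorem exists_eq_of_hasEigenvector {a : G} {ν μ : k} (hν : ∀ v, ρ a v = ν • v) {w : W}
    (hw : Module.End.HasEigenvector (resRep HO W a) μ w) :
    ∃ j : Fin d, ((χ a ^ (j : ℕ) : kˣ) : k) * ν = μ := by
  by_contra! h
  refine hw.2 (hW.equiv.symm.map_eq_zero_iff.mp (funext fun j => ?_))
  exact hW.equiv_symm_eq_zero_of_mem_eigenspace hν hw.1 (h j)

theorem x_pow_smul_equiv_symm_of_mem_eigenspace {a : G} {ν : k} (hq : orderOf (χ a) = d)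
    (hν0 : ν ≠ 0) (hν : ∀ v, ρ a v = ν • v) (j : Fin d) {w : W}
    (hw : w ∈ Module.End.eigenspace (resRep HO W a) (((χ a ^ (j : ℕ) : kˣ) : k) * ν)) :
    HO.x ^ (j : ℕ) • e (hW.equiv.symm w j) = w := by
  have hsingle : hW.equiv.symm w = Pi.single j (hW.equiv.symm w j) := by
    funext l
    rcases eq_or_ne l j with rfl | hl
    · simp
    · rw [Pi.single_eq_of_ne hl]
      exact hW.equiv_symm_eq_zero_of_mem_eigenspace hν hw
        fun h => hl (injective_units_pow_mul hq hν0 h)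
  rw [← hW.equiv_single, ← hsingle, LinearEquiv.apply_symm_apply]

theorem twistEquiv_of_linearEquiv [FiniteDimensional k V] [FiniteDimensional k V']
    [Nontrivial V] {c' : H} (hW' : IsStdQuot HO ρ' e' c' d) (hd : 0 < d) {a : G}
    (hq : orderOf (χ a) = d) {ν ν' : k}
    (hν : ∀ v, ρ a v = ν • v) (hν'0 : ν' ≠ 0) (hν' : ∀ v, ρ' a v = ν' • v)
    (f : W ≃ₗ[H] W') : TwistEquiv χ ρ ρ' := by
  obtain ⟨v₀, hv₀⟩ := exists_ne (0 : V)
  have hfe : ∀ v, f (e v) ∈ Module.End.eigenspace (resRep HO W' a) ν := fun v =>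
    HO.map_mem_eigenspace_resRep f (by simpa using hW.x_pow_smul_mem_eigenspace hν 0 v)
  obtain ⟨j, hj⟩ := hW'.exists_eq_of_hasEigenvector hν'
    ⟨hfe v₀, f.map_ne_zero_iff.mpr ((map_ne_zero_iff e (hW.injective hd)).mpr hv₀)⟩
  let F : V →ₗ[k] V' := LinearMap.proj j ∘ₗ hW'.equiv.symm.toLinearMap ∘ₗ
    (f.restrictScalars k).toLinearMap ∘ₗ e
  have hF : ∀ v, HO.x ^ (j : ℕ) • e' (F v) = f (e v) := fun v =>
    hW'.x_pow_smul_equiv_symm_of_mem_eigenspace hq hν'0 hν' j (hj ▸ hfe v)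
  have hFinj : Function.Injective F := fun v₁ v₂ h =>
    hW.injective hd (f.injective (by rw [← hF, ← hF, h]))
  have hrank : Module.finrank k V = Module.finrank k V' := by
    refine Nat.eq_of_mul_eq_mul_left hd ?_
    rw [← hW.finrank_eq, ← hW'.finrank_eq]
    exact (f.restrictScalars k).finrank_eq
  have hFg : ∀ g v, F (ρ g v) = ((χ g ^ (j : ℕ) : kˣ) : k) • ρ' g (F v) := fun g v =>
    hW'.injective_x_pow_smul j <| by
      simp only
      rw [hF, hW.equivariant, map_smul, ← hF, HO.emb_smul_x_pow_smul, ← hW'.equivariant,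
        map_smul, smul_comm]
  refine ⟨-(j : ℤ), LinearEquiv.ofBijective F
    ⟨hFinj, (LinearMap.injective_iff_surjective_of_finrank_eq_finrank hrank).mp hFinj⟩,
    fun g v => ?_⟩
  change ρ' g (F v) = _ • F (ρ g v)
  rw [hFg, smul_smul, zpow_neg, zpow_natCast, ← Units.val_mul, inv_mul_cancel, Units.val_one,
    one_smul]

end

section

variable {s : ℕ} {β : k} (hW : IsStdQuot HO ρ e (HO.x ^ s - algebraMap k H β) s)
include hW

theorem x_pow_smul_eq (w : W) : HO.x ^ s • w = β • w := by
  have := hW.ann w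
  rwa [sub_smul, sub_eq_zero, algebraMap_smul] at this

theorem mem_of_x_pow_smul_mem (hβ : β ≠ 0) {U : Submodule H W} {n : ℕ} (hn : n ≤ s) {w : W}
    (h : HO.x ^ n • w ∈ U) : w ∈ U := by
  have h' : β • w ∈ U.restrictScalars k := by
    rw [← hW.x_pow_smul_eq, ← Nat.sub_add_cancel hn, pow_add, mul_smul]
    exact U.smul_mem _ h
  exact (Submodule.smul_mem_iff _ hβ).mp h'

theorem isSimpleModule [IsAlgClosed k] [FiniteDimensional k V] (hρ : IsSimpleRep ρ) {a : G}
    (ha : a ∈ Subgroup.center G) (hs : 0 < s) (hq : orderOf (χ a) = s) (hβ : β ≠ 0) :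
    IsSimpleModule H W := by
  obtain ⟨ν, hν0, hν⟩ := hρ.exists_smul_of_mem_center ha
  have := hρ.1
  have := hW.finiteDimensional
  have : Nontrivial W := (hW.injective hs).nontrivial
  refine { eq_bot_or_eq_top := fun U => or_iff_not_imp_left.mpr fun hU => ?_ }
  obtain ⟨μ, w, hwU, hw⟩ := Submodule.exists_mem_hasEigenvector (f := resRep HO W a)
    (p := U.restrictScalars k) (fun w hw => U.smul_mem _ hw) (by simpa using hU)
  obtain ⟨j, rfl⟩ := hW.exists_eq_of_hasEigenvector hν hw
  have hxw := hW.x_pow_smul_equiv_symm_of_mem_eigenspace hq hν0 hν j hw.1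
  refine hW.eq_top_of_apply_mem hρ (v := hW.equiv.symm w j) (fun h0 => hw.2 ?_)
    (hW.mem_of_x_pow_smul_mem hβ j.2.le (by rwa [hxw]))
  rw [← hxw, h0, map_zero, smul_zero]

theorem eq_of_linearEquiv {α : k}
    (hW' : IsStdQuot HO ρ' e' (HO.x ^ s - algebraMap k H α) s) [Nontrivial W]
    (f : W ≃ₗ[H] W') : β = α := by
  obtain ⟨w, hw⟩ := exists_ne (0 : W)
  have h : β • f w = α • f w := by
    rw [← LinearMapClass.map_smul_of_tower f β w, ← hW.x_pow_smul_eq, map_smul, hW'.x_pow_smul_eq]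
  exact smul_left_injective k (f.map_ne_zero_iff.mpr hw) h

theorem bijective_x_smul (hs : 0 < s) (hβ : β ≠ 0) : Function.Bijective fun w : W => HO.x • w := by
  have hx : ∀ w : W, HO.x • HO.x ^ (s - 1) • w = β • w := fun w => by
    rw [← mul_smul, ← pow_succ', Nat.sub_add_cancel hs, hW.x_pow_smul_eq]
  refine Function.bijective_iff_has_inverse.mpr ⟨fun w => β⁻¹ • HO.x ^ (s - 1) • w,
    fun w => ?_, fun w => ?_⟩
  · simp only
    rw [← mul_smul, ← pow_succ, Nat.sub_add_cancel hs, hW.x_pow_smul_eq, inv_smul_smul₀ hβ]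
  · simp only
    rw [smul_comm, hx, inv_smul_smul₀ hβ]

theorem bijective_x_pow_smul (hs : 0 < s) (hβ : β ≠ 0) (n : ℕ) :
    Function.Bijective fun w : W => HO.x ^ n • w := by
  induction n with
  | zero =>
    simp only [pow_zero, one_smul]
    exact Function.bijective_id
  | succ n ih =>
    have : (fun w : W => HO.x ^ (n + 1) • w) = (fun w => HO.x ^ n • w) ∘ (fun w => HO.x • w) :=
      funext fun w => by simp [pow_succ, mul_smul]
    exact this ▸ ih.comp (hW.bijective_x_smul hs hβ)

theorem twist (hs : 0 < s) (hβ : β ≠ 0) (n : ℕ) :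
    IsStdQuot HO (twistRep χ n ρ) (DistribSMul.toLinearMap k W (HO.x ^ n) ∘ₗ e)
      (HO.x ^ s - algebraMap k H β) s where
  equivariant g v := by
    change HO.x ^ n • e (((χ g ^ (n : ℤ) : kˣ) : k) • ρ g v) = _
    rw [LinearMap.comp_apply, DistribSMul.toLinearMap_apply, HO.emb_smul_x_pow_smul,
      ← hW.equivariant, map_smul, smul_comm, zpow_natCast]
  ann := hW.ann
  xbasis := by
    have : (fun f : Fin s → V => ∑ j : Fin s,
        HO.x ^ (j : ℕ) • (DistribSMul.toLinearMap k W (HO.x ^ n) ∘ₗ e) (f j))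
        = (fun w => HO.x ^ n • w) ∘ hW.equiv := by
      funext f
      simp only [Function.comp_apply, hW.equiv_apply, Finset.smul_sum, LinearMap.comp_apply,
        DistribSMul.toLinearMap_apply, smul_smul, ← pow_add]
      simp only [add_comm]
    exact this ▸ (hW.bijective_x_pow_smul hs hβ n).comp hW.equiv.bijective

theorem nonempty_linearEquiv
    (hW' : IsStdQuot HO ρ' e' (HO.x ^ s - algebraMap k H β) s) (hF : RepIso ρ ρ') :
    Nonempty (W ≃ₗ[H] W') := by
  obtain ⟨F, hF⟩ := hF
  let Φ : W ≃ₗ[k] W' :=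
    hW.equiv.symm.trans ((LinearEquiv.piCongrRight fun _ => F).trans hW'.equiv)
  have hΦ : ∀ (j : Fin s) (v : V), Φ (HO.x ^ (j : ℕ) • e v) = HO.x ^ (j : ℕ) • e' (F v) := by
    intro j v
    rw [← hW.equiv_single, ← hW'.equiv_single]
    simp only [Φ, LinearEquiv.trans_apply, LinearEquiv.symm_apply_apply]
    exact congrArg hW'.equiv (funext (Pi.apply_single (fun _ => F) (fun _ => map_zero F) j v))
  have hx : ∀ w, Φ (HO.x • w) = HO.x • Φ w := hW.map_smul_of_forall fun j v => by
    simp only [LinearEquiv.coe_coe, hΦ, ← mul_smul, ← pow_succ']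
    rcases (show (j : ℕ) + 1 ≤ s from j.2).lt_or_eq with hj | hj
    · exact hΦ ⟨_, hj⟩ v
    · have h0 := hΦ ⟨0, j.pos⟩ v
      simp only [pow_zero, one_smul] at h0
      rw [hj, hW.x_pow_smul_eq, hW'.x_pow_smul_eq, map_smul, h0]
  have hg : ∀ (g : G) w, Φ (HO.emb (MonoidAlgebra.of k G g) • w)
      = HO.emb (MonoidAlgebra.of k G g) • Φ w := fun g => hW.map_smul_of_forall fun j v => by
    simp only [LinearEquiv.coe_coe, hΦ, HO.emb_smul_x_pow_smul, ← hW.equivariant,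
      ← hW'.equivariant, map_smul, hF]
  exact ⟨{ Φ with map_smul' := HO.map_smul_of_commute (Φ : W →ₗ[k] W') hx hg }⟩

theorem nonempty_linearEquiv_of_twistEquiv
    (hW' : IsStdQuot HO ρ' e' (HO.x ^ s - algebraMap k H β) s) (hs : 0 < s)
    (hχ : orderOf χ = s) (hβ : β ≠ 0) (h : TwistEquiv χ ρ ρ') : Nonempty (W ≃ₗ[H] W') := by
  obtain ⟨t, F, hF⟩ := h
  have hn : ∀ g, χ g ^ ((t % s).toNat : ℤ) = χ g ^ t := fun g => by
    rw [Int.toNat_of_nonneg (Int.emod_nonneg _ (by omega)), ← hχ]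
    exact congrArg (fun ψ : G →* kˣ => ψ g) (zpow_mod_orderOf χ t)
  refine (hW.twist hs hβ (t % s).toNat).nonempty_linearEquiv hW' ⟨F, fun g v => ?_⟩
  change F (((χ g ^ ((t % s).toNat : ℤ) : kˣ) : k) • ρ g v) = _
  rw [map_smul, hn, hF]

end

end IsStdQuot

theorem stmt_3_general {k G H : Type} [Field k] [IsAlgClosed k] [Group G] [Ring H] [Algebra k H]
    {χ : G →* kˣ} (a : G) (ha : a ∈ Subgroup.center G)
    (HO : HopfOre k G H χ) (s : ℕ) (hs : 0 < s)
    (hχord : orderOf χ = s) (hqord : orderOf (χ a) = s)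
    {V V' : Type} [AddCommGroup V] [Module k V] [FiniteDimensional k V]
    [AddCommGroup V'] [Module k V'] [FiniteDimensional k V']
    (ρ : Representation k G V) (hρ : IsSimpleRep ρ)
    (ρ' : Representation k G V') (hρ' : IsSimpleRep ρ')
    (α β : k) (hβ : β ≠ 0)
    {W W' : Type} [AddCommGroup W] [Module k W] [Module H W] [IsScalarTower k H W]
    [AddCommGroup W'] [Module k W'] [Module H W'] [IsScalarTower k H W']
    (e : V →ₗ[k] W) (hW : IsStdQuot HO ρ e (HO.x ^ s - algebraMap k H β) s)
    (e' : V' →ₗ[k] W') (hW' : IsStdQuot HO ρ' e' (HO.x ^ s - algebraMap k H α) s) :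
    IsSimpleModule H W ∧
      (Nonempty (W ≃ₗ[H] W') ↔ (TwistEquiv χ ρ ρ' ∧ β = α)) := by
  obtain ⟨ν, -, hν⟩ := hρ.exists_smul_of_mem_center ha
  obtain ⟨ν', hν'0, hν'⟩ := hρ'.exists_smul_of_mem_center ha
  have := hρ.1
  have : Nontrivial W := (hW.injective hs).nontrivial
  refine ⟨hW.isSimpleModule hρ ha hs hqord hβ, fun ⟨f⟩ => ⟨?_, hW.eq_of_linearEquiv hW' f⟩, ?_⟩
  · exact hW.twistEquiv_of_linearEquiv hW' hs hqord hν hν'0 hν' f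
  · rintro ⟨h, rfl⟩
    exact hW.nonempty_linearEquiv_of_twistEquiv hW' hs hχord hβ h

/-- **Proposition 3.4.** Assume `|χ| = |q| = s < ∞`.  For simple finite-dimensional
`kG`-modules `V_i, V_j` and `α, β ∈ k^×`, the `H`-module `V(i,β) = M(V_i)/(x^s-β)M(V_i)`
is simple, and `V(i,β) ≅ V(j,α)` if and only if `[i] = [j]` and `β = α`. -/
theorem stmt_3 {k G H : Type} [Field k] [IsAlgClosed k] [Group G] [Ring H] [Algebra k H]
    {χ : G →* kˣ} (a : G) (ha : a ∈ Subgroup.center G) (hχa : χ a ≠ 1)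
    (HO : HopfOre k G H χ) (s : ℕ) (hs : 0 < s)
    (hχord : orderOf χ = s) (hqord : orderOf (χ a) = s)
    {V V' : Type} [AddCommGroup V] [Module k V] [FiniteDimensional k V]
    [AddCommGroup V'] [Module k V'] [FiniteDimensional k V']
    (ρ : Representation k G V) (hρ : IsSimpleRep ρ)
    (ρ' : Representation k G V') (hρ' : IsSimpleRep ρ')
    (α β : k) (hα : α ≠ 0) (hβ : β ≠ 0)
    {W W' : Type} [AddCommGroup W] [Module k W] [Module H W] [IsScalarTower k H W]
    [AddCommGroup W'] [Module k W'] [Module H W'] [IsScalarTower k H W']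
    (e : V →ₗ[k] W) (hW : IsStdQuot HO ρ e (HO.x ^ s - algebraMap k H β) s)
    (e' : V' →ₗ[k] W') (hW' : IsStdQuot HO ρ' e' (HO.x ^ s - algebraMap k H α) s) :
    IsSimpleModule H W ∧
      (Nonempty (W ≃ₗ[H] W') ↔ (TwistEquiv χ ρ ρ' ∧ β = α)) :=
  stmt_3_general a ha HO s hs hχord hqord ρ hρ ρ' hρ' α β hβ e hW e' hW'

end HopfOrePaper
end

section
/- Let M be a simple finite dimensional H-module. (1) If M is x-torsion, then M ≅ V_i for some i ∈ I. (2) If |χ| = |q| and M is x-torsionfree, then s := |χ| is finite and M ≅ V(i,β) for some i ∈ I and some β ∈ k^×. -/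
open scoped TensorProduct

namespace HopfOrePaper

variable {k G H : Type} [Field k] [Group G] [Ring H] [Algebra k H] {χ : G →* kˣ}

/-
If `x` kills `M`, every `G`-stable subspace is stable under the basis `g xⁱ` of `H`, hence is an
`H`-submodule. If `x` acts injectively, taking determinants in `a x = q x a` gives
`q ^ dim M = 1`, so `s = |χ| = |q|` is finite. Then `x ^ s` is central in `H` and acts on `M` by a
scalar `β ≠ 0`. In a simple `kG`-submodule `V ⊆ M` the central element `a` acts by a scalar `λ`,
so the spaces `xʲ V`, `0 ≤ j < s`, lie in the distinct eigenspaces `qʲ λ` of `a` and their sum is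
direct; being stable under `G` and `x`, that sum is `M`.
-/

open Module

section

variable {V : Type} [AddCommGroup V] [Module k V]

theorem pow_finrank_eq_one_of_mul_eq_smul_mul {A B : End k V} (hA : IsUnit A) (hB : IsUnit B)
    {c : k} (h : A * B = c • (B * A)) : c ^ finrank k V = 1 := by
  have hdet := congrArg LinearMap.det h
  rw [LinearMap.det_smul, map_mul, map_mul, mul_comm (LinearMap.det B)] at hdet
  have hAB : LinearMap.det A * LinearMap.det B ≠ 0 :=
    ((hA.map LinearMap.det).mul (hB.map LinearMap.det)).ne_zero
  exact (mul_eq_right₀ hAB).mp hdet.symm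

theorem exists_forall_eq_smul_of_commute [IsAlgClosed k] [FiniteDimensional k V] [Nontrivial V]
    {ι : Type*} (S : ι → End k V)
    (hS : ∀ p : Submodule k V, (∀ i, p ≤ p.comap (S i)) → p = ⊥ ∨ p = ⊤)
    (T : End k V) (hT : ∀ i, Commute T (S i)) : ∃ μ : k, ∀ v, T v = μ • v := by
  obtain ⟨μ, hμ⟩ := T.exists_eigenvalue
  refine ⟨μ, fun v => ?_⟩
  have htop : T.eigenspace μ = ⊤ :=
    (hS _ fun i => T.mapsTo_genEigenspace_of_comm (hT i) μ 1).resolve_left hμ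
  exact T.mem_eigenspace_iff.mp (htop ▸ Submodule.mem_top)

theorem exists_isSimpleRep_subrepresentation [FiniteDimensional k V] [Nontrivial V]
    (ρ : Representation k G V) :
    ∃ (W : Submodule k V) (hW : ∀ g, W ≤ W.comap (ρ g)),
      IsSimpleRep (ρ.subrepresentation W hW) := by
  obtain ⟨W, ⟨hW0, hW⟩, hmin⟩ := WellFounded.has_min wellFounded_lt
    {p : Submodule k V | p ≠ ⊥ ∧ ∀ g, p ≤ p.comap (ρ g)} ⟨⊤, top_ne_bot, fun _ => le_top⟩
  refine ⟨W, hW, Submodule.nontrivial_iff_ne_bot.mpr hW0, fun p hp => ?_⟩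
  by_cases hp0 : p = ⊥
  · exact Or.inl hp0
  refine Or.inr (Submodule.map_injective_of_injective W.injective_subtype ?_)
  rw [Submodule.map_subtype_top]
  by_contra hne
  refine hmin (p.map W.subtype) ⟨?_, ?_⟩ (lt_of_le_of_ne (Submodule.map_subtype_le W p) hne)
  · rwa [Ne, ← Submodule.map_bot W.subtype,
      (Submodule.map_injective_of_injective W.injective_subtype).eq_iff]
  · rintro g _ ⟨v, hv, rfl⟩
    exact ⟨_, hp g v hv, rfl⟩

theorem IsSimpleRep.exists_smul_eq_of_mem_center [IsAlgClosed k] [FiniteDimensional k V]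
    {ρ : Representation k G V} (hρ : IsSimpleRep ρ) {a : G} (ha : a ∈ Subgroup.center G) :
    ∃ μ : k, μ ≠ 0 ∧ ∀ v, ρ a v = μ • v := by
  have := hρ.1
  obtain ⟨μ, hμ⟩ := exists_forall_eq_smul_of_commute ρ hρ.2 (ρ a) fun g => by
    rw [Commute, SemiconjBy, ← map_mul, ← map_mul, Subgroup.mem_center_iff.mp ha g]
  refine ⟨μ, fun h0 => ?_, hμ⟩
  obtain ⟨v, hv⟩ := exists_ne (0 : V)
  exact hv ((ρ.apply_bijective a).injective (by rw [hμ, h0, zero_smul, map_zero]))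

end

section

variable {M : Type} [AddCommGroup M] [Module k M] [Module H M] [IsScalarTower k H M]

theorem eq_bot_or_eq_top_of_forall_smul_mem [IsSimpleModule H M] (p : Submodule k M)
    (hp : ∀ (h : H), ∀ m ∈ p, h • m ∈ p) : p = ⊥ ∨ p = ⊤ := by
  let P : Submodule H M := { p with smul_mem' := hp }
  have hP : P.restrictScalars k = p := rfl
  rw [← hP, Submodule.restrictScalars_eq_bot_iff, Submodule.restrictScalars_eq_top_iff]
  exact eq_bot_or_eq_top P

end

namespace HopfOre

variable (HO : HopfOre k G H χ)

@[elab_as_elim]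
theorem induction_on {motive : H → Prop} (h : H)
    (basis : ∀ (g : G) (i : ℕ), motive (HO.emb (MonoidAlgebra.of k G g) * HO.x ^ i))
    (zero : motive 0) (add : ∀ h₁ h₂, motive h₁ → motive h₂ → motive (h₁ + h₂))
    (smul : ∀ (c : k) (h), motive h → motive (c • h)) : motive h := by
  have hh : h ∈ Submodule.span k
      (Set.range fun p : G × ℕ => HO.emb (MonoidAlgebra.of k G p.1) * HO.x ^ p.2) :=
    HO.basis_span ▸ Submodule.mem_top
  induction hh using Submodule.span_induction with
  | mem _ hp =>
    obtain ⟨⟨g, i⟩, rfl⟩ := hp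
    exact basis g i
  | zero => exact zero
  | add _ _ _ _ h₁ h₂ => exact add _ _ h₁ h₂
  | smul c _ _ h => exact smul c _ h

theorem of_mul_x (g : G) :
    HO.emb (MonoidAlgebra.of k G g) * HO.x
      = (χ g : k) • (HO.x * HO.emb (MonoidAlgebra.of k G g)) := by
  rw [HO.comm_rel, smul_smul, ← Units.val_mul, mul_inv_cancel, Units.val_one, one_smul]

theorem of_mul_x_pow (g : G) (j : ℕ) :
    HO.emb (MonoidAlgebra.of k G g) * HO.x ^ j
      = (χ g : k) ^ j • (HO.x ^ j * HO.emb (MonoidAlgebra.of k G g)) := by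
  induction j with
  | zero => simp
  | succ j ih =>
    rw [pow_succ, ← mul_assoc, ih, smul_mul_assoc, mul_assoc, of_mul_x, mul_smul_comm, smul_smul,
      ← mul_assoc, ← pow_succ, ← pow_succ]

theorem commute_x_pow_orderOf (h : H) : Commute (HO.x ^ orderOf χ) h := by
  have hg : ∀ g : G, Commute (HO.x ^ orderOf χ) (HO.emb (MonoidAlgebra.of k G g)) := fun g => by
    rw [Commute, SemiconjBy, of_mul_x_pow, ← Units.val_pow_eq_pow_val, ← MonoidHom.pow_apply,
      pow_orderOf_eq_one, MonoidHom.one_apply, Units.val_one, one_smul]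
  induction h using HO.induction_on with
  | basis g i => exact (hg g).mul_right (Commute.pow_pow_self HO.x _ i)
  | zero => exact Commute.zero_right _
  | add _ _ h₁ h₂ => exact h₁.add_right h₂
  | smul c _ h => exact h.smul_right c

variable {M : Type} [AddCommGroup M] [Module k M] [Module H M] [IsScalarTower k H M]

theorem smul_mem_of_le_comap {p : Submodule k M}
    (hg : ∀ g, p ≤ p.comap (resRep HO M g)) (hx : ∀ m ∈ p, HO.x • m ∈ p)
    (h : H) {m : M} (hm : m ∈ p) : h • m ∈ p := by
  induction h using HO.induction_on with
  | basis g i =>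
    have hxi : HO.x ^ i • m ∈ p := by
      induction i with
      | zero => simpa using hm
      | succ i ih => rw [pow_succ', mul_smul]; exact hx _ ih
    rw [mul_smul]
    exact hg g hxi
  | zero => rw [zero_smul]; exact p.zero_mem
  | add _ _ h₁ h₂ => rw [add_smul]; exact p.add_mem h₁ h₂
  | smul c _ h => rw [smul_assoc]; exact p.smul_mem c h

theorem isSimpleRep_resRep_of_x_smul_eq_zero [IsSimpleModule H M]
    (hx : ∀ m : M, HO.x • m = 0) : IsSimpleRep (resRep HO M) :=
  ⟨IsSimpleModule.nontrivial H M, fun p hp => eq_bot_or_eq_top_of_forall_smul_mem p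
    fun h _ hm => HO.smul_mem_of_le_comap hp (fun m _ => hx m ▸ p.zero_mem) h hm⟩

theorem pow_finrank_eq_one [FiniteDimensional k M] (hx : IsSMulRegular M HO.x) (g : G) :
    (χ g : k) ^ finrank k M = 1 := by
  have hX : IsUnit (Algebra.lsmul k k M HO.x) :=
    (Module.End.isUnit_iff _).mpr ⟨hx, LinearMap.injective_iff_surjective.mp hx⟩
  have hg : IsUnit (Algebra.lsmul k k M (HO.emb (MonoidAlgebra.of k G g))) :=
    (((Group.isUnit g).map (MonoidAlgebra.of k G)).map HO.emb).map _
  refine pow_finrank_eq_one_of_mul_eq_smul_mul hg hX ?_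
  rw [← map_mul, ← map_mul, ← map_smul, HO.of_mul_x]

theorem exists_x_pow_orderOf_smul_eq [IsAlgClosed k] [FiniteDimensional k M]
    [IsSimpleModule H M] :
    ∃ β : k, ∀ m : M, HO.x ^ orderOf χ • m = β • m := by
  have := IsSimpleModule.nontrivial H M
  exact exists_forall_eq_smul_of_commute (Algebra.lsmul k k M)
    eq_bot_or_eq_top_of_forall_smul_mem _
    fun h => (HO.commute_x_pow_orderOf h).map _

theorem injective_sum_x_pow_smul (hx : IsSMulRegular M HO.x) {a : G} {μ : k}
    (hμ : μ ≠ 0) (V : Submodule k M) (hV : ∀ v ∈ V, HO.emb (MonoidAlgebra.of k G a) • v = μ • v)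
    {n : ℕ} (hn : n ≤ orderOf (χ a)) :
    Function.Injective fun f : Fin n → V => ∑ j : Fin n, HO.x ^ (j : ℕ) • V.subtype (f j) := by
  intro f f' hff
  set T := Algebra.lsmul k k M (HO.emb (MonoidAlgebra.of k G a))
  have heig : Function.Injective fun j : Fin n => (χ a : k) ^ (j : ℕ) * μ := by
    intro i j hij
    have hlt : ∀ i : Fin n, (i : ℕ) < orderOf (χ a : k) := fun i => by
      rw [orderOf_units]; omega
    exact Fin.ext (pow_injOn_Iio_orderOf (hlt i) (hlt j) (mul_right_cancel₀ hμ hij))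
  have hmem : ∀ (v : V) (j : Fin n),
      HO.x ^ (j : ℕ) • (v : M) ∈ T.eigenspace ((χ a : k) ^ (j : ℕ) * μ) := fun v j => by
    rw [Module.End.mem_eigenspace_iff, Algebra.lsmul_apply, ← mul_smul, of_mul_x_pow, smul_assoc,
      mul_smul, hV v v.2, smul_comm (HO.x ^ (j : ℕ)) μ, smul_smul]
  have hterm := (iSupIndep_iff_finsetSum_eq_imp_eq _).mp (T.eigenspaces_iSupIndep.comp heig)
    Finset.univ _ _ (fun j _ => ⟨hmem (f j) j, hmem (f' j) j⟩) hff
  funext j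
  exact Subtype.ext (hx.pow j (hterm j (Finset.mem_univ j)))

theorem surjective_sum_x_pow_smul [IsSimpleModule H M] (V : Submodule k M) (hV0 : V ≠ ⊥)
    (hVG : ∀ g, V ≤ V.comap (resRep HO M g)) {n : ℕ} (hn : 0 < n)
    (hVx : ∀ v ∈ V, HO.x ^ n • v ∈ V) :
    Function.Surjective fun f : Fin n → V => ∑ j : Fin n, HO.x ^ (j : ℕ) • V.subtype (f j) := by
  set N := ⨆ j : Fin n, V.map (Algebra.lsmul k k M (HO.x ^ (j : ℕ)))
  have hxV : ∀ (j : Fin n), ∀ v ∈ V, HO.x ^ (j : ℕ) • v ∈ N := fun j v hv =>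
    Submodule.mem_iSup_of_mem j ⟨v, hv, rfl⟩
  have hVN : V ≤ N := fun v hv => by simpa using hxV ⟨0, hn⟩ v hv
  have hNG : ∀ g, N ≤ N.comap (resRep HO M g) := fun g => iSup_le fun j => by
    rintro _ ⟨v, hv, rfl⟩
    change HO.emb (MonoidAlgebra.of k G g) • HO.x ^ (j : ℕ) • v ∈ N
    rw [← mul_smul, of_mul_x_pow, smul_assoc, mul_smul]
    exact N.smul_mem _ (hxV j _ (hVG g hv))
  have hNx : N ≤ N.comap (Algebra.lsmul k k M HO.x) := iSup_le fun j => by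
    rintro _ ⟨v, hv, rfl⟩
    change HO.x • HO.x ^ (j : ℕ) • v ∈ N
    rw [← mul_smul, ← pow_succ']
    by_cases hj : (j : ℕ) + 1 < n
    · exact hxV ⟨_, hj⟩ v hv
    · rw [show (j : ℕ) + 1 = n by omega]
      exact hVN (hVx v hv)
  have hN : N = ⊤ := (eq_bot_or_eq_top_of_forall_smul_mem N fun h _ hm =>
    HO.smul_mem_of_le_comap hNG (fun _ hm => hNx hm) h hm).resolve_left
    fun h => hV0 (eq_bot_iff.mpr (h ▸ hVN))
  intro m
  have hm : m ∈ ⨆ j ∈ (Finset.univ : Finset (Fin n)),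
      V.map (Algebra.lsmul k k M (HO.x ^ (j : ℕ))) := by
    simp only [Finset.mem_univ, iSup_pos]
    exact (hN ▸ Submodule.mem_top : m ∈ N)
  obtain ⟨w, hw⟩ := (Submodule.mem_iSup_finset_iff_exists_sum _ m).mp hm
  choose v hv hvw using fun j => (w j).2
  exact ⟨fun j => ⟨v j, hv j⟩, hw ▸ Finset.sum_congr rfl fun j _ => hvw j⟩

theorem nonempty_stdWitness [IsAlgClosed k] [FiniteDimensional k M] [IsSimpleModule H M]
    (hx : IsSMulRegular M HO.x) {a : G} (ha : a ∈ Subgroup.center G)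
    (hord : orderOf χ = orderOf (χ a)) (hs : 0 < orderOf χ) {β : k}
    (hβ : ∀ m : M, HO.x ^ orderOf χ • m = β • m) :
    Nonempty (StdWitness HO M (HO.x ^ orderOf χ - algebraMap k H β) (orderOf χ)) := by
  have := IsSimpleModule.nontrivial H M
  obtain ⟨V, hVG, hV⟩ := exists_isSimpleRep_subrepresentation (resRep HO M)
  obtain ⟨μ, hμ, hμV⟩ := hV.exists_smul_eq_of_mem_center ha
  have hV0 : V ≠ ⊥ := Submodule.nontrivial_iff_ne_bot.mp hV.1
  have hinj := HO.injective_sum_x_pow_smul hx hμ V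
    (fun v hv => congrArg Subtype.val (hμV ⟨v, hv⟩)) hord.le
  have hsurj := HO.surjective_sum_x_pow_smul V hV0 hVG hs fun v hv => hβ v ▸ V.smul_mem β hv
  exact ⟨⟨V, _, inferInstance, hV, V.subtype, fun _ _ => rfl,
    fun m => by rw [sub_smul, algebraMap_smul, hβ, sub_self], hinj, hsurj⟩⟩

end HopfOre

theorem stmt_4_general {k G H : Type} [Field k] [IsAlgClosed k] [Group G] [Ring H] [Algebra k H]
    {χ : G →* kˣ} (a : G) (ha : a ∈ Subgroup.center G)
    (HO : HopfOre k G H χ)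
    (M : Type) [AddCommGroup M] [Module k M] [Module H M] [IsScalarTower k H M]
    [FiniteDimensional k M] (hM : IsSimpleModule H M) :
    ((∀ m : M, HO.x • m = 0) → IsSimpleRep (resRep HO M)) ∧
    (orderOf χ = orderOf (χ a) → (∀ m : M, HO.x • m = 0 → m = 0) →
      IsOfFinOrder χ ∧ ∃ β : k, β ≠ 0 ∧
        Nonempty (StdWitness HO M (HO.x ^ orderOf χ - algebraMap k H β) (orderOf χ))) := by
  have := IsSimpleModule.nontrivial H M
  refine ⟨HO.isSimpleRep_resRep_of_x_smul_eq_zero, fun hord htf => ?_⟩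
  have hx : IsSMulRegular M HO.x := .of_right_eq_zero_of_smul htf
  have hs : 0 < orderOf χ := by
    rw [hord, orderOf_pos_iff, isOfFinOrder_iff_pow_eq_one]
    exact ⟨_, finrank_pos, Units.ext (by simpa using HO.pow_finrank_eq_one hx a)⟩
  obtain ⟨β, hβ⟩ := HO.exists_x_pow_orderOf_smul_eq (M := M)
  have hβ0 : β ≠ 0 := by
    rintro rfl
    obtain ⟨m, hm⟩ := exists_ne (0 : M)
    exact hm ((hx.pow _).right_eq_zero_of_smul (by rw [hβ, zero_smul]))
  exact ⟨orderOf_pos_iff.mp hs, β, hβ0, HO.nonempty_stdWitness hx ha hord hs hβ⟩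

/-- **Theorem 3.5.** Let `M` be a simple finite-dimensional `H`-module.
(1) If `M` is `x`-torsion, then `M ≅ V_i` for some `i ∈ I`, i.e. the underlying
`kG`-module of `M` is simple (and `x` acts as `0`).
(2) If `|χ| = |q|` and `M` is `x`-torsionfree, then `s = |χ|` is finite and
`M ≅ V(i,β) = M(V_i)/(x^s-β)M(V_i)` for some simple `kG`-module `V_i` and `β ∈ k^×`. -/
theorem stmt_4 {k G H : Type} [Field k] [IsAlgClosed k] [Group G] [Ring H] [Algebra k H]
    {χ : G →* kˣ} (a : G) (ha : a ∈ Subgroup.center G) (hχa : χ a ≠ 1)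
    (HO : HopfOre k G H χ)
    (M : Type) [AddCommGroup M] [Module k M] [Module H M] [IsScalarTower k H M]
    [FiniteDimensional k M] (hM : IsSimpleModule H M) :
    ((∀ m : M, HO.x • m = 0) → IsSimpleRep (resRep HO M)) ∧
    (orderOf χ = orderOf (χ a) → (∀ m : M, HO.x • m = 0 → m = 0) →
      IsOfFinOrder χ ∧ ∃ β : k, β ≠ 0 ∧
        Nonempty (StdWitness HO M (HO.x ^ orderOf χ - algebraMap k H β) (orderOf χ))) :=
  stmt_4_general a ha HO M hM

end HopfOrePaper
end

section
/- Assume kG is finite dimensional and semisimple. For any i ∈ I and t ≥ 1, the H-module V_t(i) is indecomposable and uniserial (its submodules form a chain), and its composition length is t; moreover its composition factors are V_{σ^l(i)} for l = 0, 1, …, t−1. -/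
open scoped TensorProduct

namespace HopfOrePaper

variable {k G H : Type} [Field k] [Group G] [Ring H] [Algebra k H] {χ : G →* kˣ}

/-! The coordinates of `w = ∑_{j<t} xʲ e(w_j)` make the action explicit: `g` acts on the
`j`-th coordinate by `χ(g)ʲ ρ(g)`, and `x` shifts coordinates up by one, killing the last.
Let `U_l` be the elements whose first `l` coordinates vanish. If `l` is the least index at which
some `w` in a submodule `N` has a nonzero coordinate, then `N ≤ U_l`; conversely `x • w` shows
`U_{l+1} ≤ N` by descending induction, so `N` contains `xˡ e(w_l)`, hence all of `xˡ e(V)` by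
simplicity of `V`, hence `U_l`. The submodules thus form the chain `0 = U_t < ⋯ < U_0 = W`, and
`U_l / U_{l+1} ≅ xˡ e(V)` is `V` twisted by `χˡ`, with `x` acting by zero. -/

theorem IsUniserial.isIndecomposableMod {R M : Type} [Ring R] [AddCommGroup M] [Module R M]
    [Nontrivial M] (h : IsUniserial R M) : IsIndecomposableMod R M := by
  refine ⟨inferInstance, fun p q hpq => ?_⟩
  rcases h p q with hle | hle
  · exact Or.inl (eq_bot_iff.mpr ((le_inf le_rfl hle).trans hpq.inf_eq_bot.le))
  · exact Or.inr (eq_bot_iff.mpr ((le_inf hle le_rfl).trans hpq.inf_eq_bot.le))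

section HopfOre

variable {W : Type} [AddCommGroup W] [Module k W] [Module H W] [IsScalarTower k H W]

theorem HopfOre.of_mul_x_s6 (HO : HopfOre k G H χ) (g : G) :
    HO.emb (.of k G g) * HO.x = (χ g : k) • (HO.x * HO.emb (.of k G g)) := by
  rw [HO.comm_rel, smul_smul, ← Units.val_mul, mul_inv_cancel, Units.val_one, one_smul]

theorem HopfOre.of_mul_x_pow_s6 (HO : HopfOre k G H χ) (g : G) (i : ℕ) :
    HO.emb (.of k G g) * HO.x ^ i = (χ g : k) ^ i • (HO.x ^ i * HO.emb (.of k G g)) := by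
  induction i with
  | zero => simp
  | succ i ih =>
    rw [pow_succ, ← mul_assoc, ih, smul_mul_assoc, mul_assoc, HO.of_mul_x_s6, mul_smul_comm,
      smul_smul, ← mul_assoc, ← pow_succ, ← pow_succ]

theorem HopfOre.smul_mem_of_stable (HO : HopfOre k G H χ) (S : Submodule k W)
    (hg : ∀ g : G, ∀ w ∈ S, HO.emb (.of k G g) • w ∈ S) (hx : ∀ w ∈ S, HO.x • w ∈ S)
    (h : H) {w : W} (hw : w ∈ S) : h • w ∈ S := by
  have hxpow : ∀ i : ℕ, ∀ w ∈ S, HO.x ^ i • w ∈ S := by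
    intro i
    induction i with
    | zero => simp
    | succ i ih => intro w hw; rw [pow_succ', mul_smul]; exact hx _ (ih w hw)
  have hh : h ∈ Submodule.span k _ := HO.basis_span ▸ Submodule.mem_top
  induction hh using Submodule.span_induction with
  | mem _ hy => obtain ⟨⟨g, i⟩, rfl⟩ := hy; rw [mul_smul]; exact hg g _ (hxpow i w hw)
  | zero => simp
  | add _ _ _ _ h₁ h₂ => rw [add_smul]; exact S.add_mem h₁ h₂
  | smul c _ _ h₁ => rw [smul_assoc]; exact S.smul_mem c h₁

def HopfOre.submoduleOfStable (HO : HopfOre k G H χ) (S : Submodule k W)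
    (hg : ∀ g : G, ∀ w ∈ S, HO.emb (.of k G g) • w ∈ S) (hx : ∀ w ∈ S, HO.x • w ∈ S) :
    Submodule H W where
  toAddSubmonoid := S.toAddSubmonoid
  smul_mem' h _ hw := HO.smul_mem_of_stable S hg hx h hw

end HopfOre

namespace IsStdQuot

variable {HO : HopfOre k G H χ} {V : Type} [AddCommGroup V] [Module k V]
  {ρ : Representation k G V} {W : Type} [AddCommGroup W] [Module k W] [Module H W]
  [IsScalarTower k H W] {e : V →ₗ[k] W}

section Coordinates

variable {c : H} {d : ℕ} (hW : IsStdQuot HO ρ e c d)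

include hW in
theorem emb_smul_xpow_smul (g : G) (i : ℕ) (v : V) :
    HO.emb (.of k G g) • HO.x ^ i • e v = (χ g : k) ^ i • HO.x ^ i • e (ρ g v) := by
  rw [← mul_smul, HO.of_mul_x_pow_s6, smul_assoc, mul_smul, hW.equivariant]

noncomputable def basisEquiv : (Fin d → V) ≃ₗ[k] W :=
  LinearEquiv.ofBijective (∑ j : Fin d, (HO.x ^ (j : ℕ) • e) ∘ₗ LinearMap.proj j)
    (by convert hW.xbasis using 1; ext f; simp)

theorem basisEquiv_apply (f : Fin d → V) :
    hW.basisEquiv f = ∑ j : Fin d, HO.x ^ (j : ℕ) • e (f j) := by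
  simp [basisEquiv]

/-- The `j`-th coordinate, extended by zero to `j ≥ d`. -/
noncomputable def coord (j : ℕ) : W →ₗ[k] V :=
  if h : j < d then LinearMap.proj ⟨j, h⟩ ∘ₗ hW.basisEquiv.symm.toLinearMap else 0

theorem coord_of_le {j : ℕ} (hj : d ≤ j) : hW.coord j = 0 :=
  dif_neg (by omega)

theorem sum_coord (w : W) : ∑ j ∈ Finset.range d, HO.x ^ j • e (hW.coord j w) = w := by
  conv_rhs => rw [← hW.basisEquiv.apply_symm_apply w, basisEquiv_apply]
  rw [← Fin.sum_univ_eq_sum_range]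
  refine Finset.sum_congr rfl fun j _ => ?_
  simp [coord, j.isLt]

theorem coord_sum (f : ℕ → V) {j : ℕ} (hj : j < d) :
    hW.coord j (∑ i ∈ Finset.range d, HO.x ^ i • e (f i)) = f j := by
  rw [← Fin.sum_univ_eq_sum_range (fun i => HO.x ^ i • e (f i)),
    ← basisEquiv_apply hW (fun i => f i)]
  simp [coord, hj]

theorem eq_zero_of_coord {w : W} (h : ∀ j < d, hW.coord j w = 0) : w = 0 := by
  rw [← hW.sum_coord w]
  exact Finset.sum_eq_zero fun j hj => by rw [h j (Finset.mem_range.mp hj), map_zero, smul_zero]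

theorem coord_xpow_smul_of_lt {i : ℕ} (hi : i < d) (j : ℕ) (v : V) :
    hW.coord j (HO.x ^ i • e v) = if i = j then v else 0 := by
  rcases lt_or_ge j d with hj | hj
  · have hsum : HO.x ^ i • e v
        = ∑ n ∈ Finset.range d, HO.x ^ n • e (if n = i then v else 0) := by
      rw [Finset.sum_eq_single_of_mem i (Finset.mem_range.mpr hi) fun n _ hn => by simp [hn],
        if_pos rfl]
    rw [hsum, hW.coord_sum _ hj]
    simp [eq_comm]
  · rw [hW.coord_of_le hj, if_neg (by omega), LinearMap.zero_apply]

theorem coord_emb_smul (g : G) (j : ℕ) (w : W) :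
    hW.coord j (HO.emb (.of k G g) • w) = (χ g : k) ^ j • ρ g (hW.coord j w) := by
  rcases lt_or_ge j d with hj | hj
  · conv_lhs => rw [← hW.sum_coord w, Finset.smul_sum]
    have hterm : ∀ i, HO.emb (.of k G g) • HO.x ^ i • e (hW.coord i w)
        = HO.x ^ i • e ((χ g : k) ^ i • ρ g (hW.coord i w)) := fun i => by
      rw [hW.emb_smul_xpow_smul, map_smul, smul_comm]
    simp_rw [hterm]
    exact hW.coord_sum _ hj
  · simp [hW.coord_of_le hj]

include hW in
theorem xpow_smul_mem_of_isSimpleRep (hρ : IsSimpleRep ρ) (N : Submodule H W) (l : ℕ)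
    {v : V} (hv : v ≠ 0) (hvN : HO.x ^ l • e v ∈ N) (v' : V) : HO.x ^ l • e v' ∈ N := by
  let S := (N.restrictScalars k).comap (HO.x ^ l • e)
  have hS : ∀ g : G, ∀ u ∈ S, ρ g u ∈ S := by
    intro g u hu
    have hgu : (χ g : k) ^ l • HO.x ^ l • e (ρ g u) ∈ N.restrictScalars k := by
      rw [← hW.emb_smul_xpow_smul]
      exact N.smul_mem _ hu
    exact ((N.restrictScalars k).smul_mem_iff (pow_ne_zero l (χ g).ne_zero)).mp hgu
  rcases hρ.2 S hS with hbot | htop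
  · exact absurd ((Submodule.mem_bot k).mp (hbot ▸ hvN : v ∈ (⊥ : Submodule k V))) hv
  · exact (htop ▸ Submodule.mem_top : v' ∈ S)

end Coordinates

variable {t : ℕ} (hW : IsStdQuot HO ρ e (HO.x ^ t) t)

include hW in
theorem xpow_smul_eq_zero {i : ℕ} (hi : t ≤ i) (w : W) : HO.x ^ i • w = 0 := by
  rw [← Nat.sub_add_cancel hi, pow_add, mul_smul, hW.ann, smul_zero]

theorem coord_xpow_smul {j : ℕ} (hj : j < t) (i : ℕ) (v : V) :
    hW.coord j (HO.x ^ i • e v) = if i = j then v else 0 := by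
  rcases lt_or_ge i t with hi | hi
  · exact hW.coord_xpow_smul_of_lt hi j v
  · rw [hW.xpow_smul_eq_zero hi, map_zero, if_neg (by omega)]

theorem coord_x_smul {j : ℕ} (hj : j < t) (w : W) :
    hW.coord j (HO.x • w) = ∑ i ∈ Finset.range t, if i + 1 = j then hW.coord i w else 0 := by
  conv_lhs => rw [← hW.sum_coord w, Finset.smul_sum]
  simp_rw [smul_smul, ← pow_succ', map_sum, hW.coord_xpow_smul hj]

theorem coord_succ_x_smul {j : ℕ} (hj : j + 1 < t) (w : W) :
    hW.coord (j + 1) (HO.x • w) = hW.coord j w := by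
  simp [hW.coord_x_smul hj, Nat.lt_of_succ_lt hj]

theorem coord_x_smul_eq_zero {l : ℕ} {w : W} (hw : ∀ j < l, hW.coord j w = 0) {j : ℕ}
    (hj : j < l + 1) : hW.coord j (HO.x • w) = 0 := by
  rcases le_or_gt t j with hjt | hjt
  · rw [hW.coord_of_le hjt, LinearMap.zero_apply]
  cases j with
  | zero => simp [hW.coord_x_smul hjt]
  | succ j => rw [hW.coord_succ_x_smul hjt, hw j (by omega)]

/-- The submodule `xˡ W`, described through its vanishing coordinates. -/
noncomputable def coordFiltration (l : ℕ) : Submodule H W :=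
  HO.submoduleOfStable (⨅ j < l, LinearMap.ker (hW.coord j))
    (fun g w hw => by
      simp only [Submodule.mem_iInf, LinearMap.mem_ker] at hw ⊢
      intro j hj
      rw [hW.coord_emb_smul, hw j hj, map_zero, smul_zero])
    (fun w hw => by
      simp only [Submodule.mem_iInf, LinearMap.mem_ker] at hw ⊢
      exact fun j hj => hW.coord_x_smul_eq_zero hw (Nat.lt_succ_of_lt hj))

theorem mem_coordFiltration {l : ℕ} {w : W} :
    w ∈ hW.coordFiltration l ↔ ∀ j < l, hW.coord j w = 0 := by
  change w ∈ ⨅ j < l, LinearMap.ker (hW.coord j) ↔ _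
  simp

theorem coordFiltration_antitone : Antitone hW.coordFiltration :=
  fun _ _ hll' _ hw => hW.mem_coordFiltration.mpr fun j hj =>
    hW.mem_coordFiltration.mp hw j (lt_of_lt_of_le hj hll')

theorem coordFiltration_zero : hW.coordFiltration 0 = ⊤ :=
  eq_top_iff.mpr fun _ _ => hW.mem_coordFiltration.mpr fun _ hj => absurd hj (Nat.not_lt_zero _)

theorem coordFiltration_of_le {l : ℕ} (hl : t ≤ l) : hW.coordFiltration l = ⊥ :=
  eq_bot_iff.mpr fun _ hw => (Submodule.mem_bot H).mpr <|
    hW.eq_zero_of_coord fun j hj => hW.mem_coordFiltration.mp hw j (lt_of_lt_of_le hj hl)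

theorem xpow_smul_mem_coordFiltration {l i : ℕ} (hli : l ≤ i) (v : V) :
    HO.x ^ i • e v ∈ hW.coordFiltration l := by
  rw [mem_coordFiltration]
  intro j hj
  rcases lt_or_ge j t with hjt | hjt
  · rw [hW.coord_xpow_smul hjt, if_neg (by omega)]
  · rw [hW.coord_of_le hjt, LinearMap.zero_apply]

theorem x_smul_mem_coordFiltration {l : ℕ} {w : W} (hw : w ∈ hW.coordFiltration l) :
    HO.x • w ∈ hW.coordFiltration (l + 1) :=
  hW.mem_coordFiltration.mpr fun _ hj =>
    hW.coord_x_smul_eq_zero (hW.mem_coordFiltration.mp hw) hj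

theorem sub_xpow_smul_coord_mem {l : ℕ} {u : W} (hu : u ∈ hW.coordFiltration l) :
    u - HO.x ^ l • e (hW.coord l u) ∈ hW.coordFiltration (l + 1) := by
  rw [mem_coordFiltration] at hu ⊢
  intro j hj
  rcases lt_or_ge j t with hjt | hjt
  · rw [map_sub, hW.coord_xpow_smul hjt]
    rcases Nat.lt_succ_iff_lt_or_eq.mp hj with hjl | rfl
    · rw [hu j hjl, if_neg (by omega), sub_zero]
    · rw [if_pos rfl, sub_self]
  · rw [hW.coord_of_le hjt, LinearMap.zero_apply]

theorem coordFiltration_lt [Nontrivial V] {l : ℕ} (hl : l < t) :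
    hW.coordFiltration (l + 1) < hW.coordFiltration l := by
  obtain ⟨v, hv⟩ := exists_ne (0 : V)
  refine lt_of_le_of_ne (hW.coordFiltration_antitone l.le_succ) fun heq => hv ?_
  have hmem := hW.xpow_smul_mem_coordFiltration (le_refl l) v
  rw [← heq, mem_coordFiltration] at hmem
  simpa [hW.coord_xpow_smul hl] using hmem l l.lt_succ_self

theorem coordFiltration_le_of_succ_le (hρ : IsSimpleRep ρ) {N : Submodule H W} {l : ℕ}
    (hsucc : hW.coordFiltration (l + 1) ≤ N) {w : W} (hwN : w ∈ N)
    (hw : w ∈ hW.coordFiltration l) (hwl : hW.coord l w ≠ 0) : hW.coordFiltration l ≤ N := by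
  have hlead : HO.x ^ l • e (hW.coord l w) ∈ N := by
    simpa using N.sub_mem hwN (hsucc (hW.sub_xpow_smul_coord_mem hw))
  intro u hu
  simpa using N.add_mem (hsucc (hW.sub_xpow_smul_coord_mem hu))
    (hW.xpow_smul_mem_of_isSimpleRep hρ N l hwl hlead (hW.coord l u))

theorem coordFiltration_le_of_coord_ne_zero (hρ : IsSimpleRep ρ) {N : Submodule H W} {l : ℕ}
    (hN : N ≤ hW.coordFiltration l) {w : W} (hwN : w ∈ N) (hwl : hW.coord l w ≠ 0) :
    hW.coordFiltration l ≤ N := by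
  induction hn : t - l generalizing l N w with
  | zero => exact absurd (by rw [hW.coord_of_le (by omega), LinearMap.zero_apply]) hwl
  | succ n ih =>
    refine hW.coordFiltration_le_of_succ_le hρ ?_ hwN (hN hwN) hwl
    rcases lt_or_ge (l + 1) t with hlt | hge
    · refine le_trans (ih inf_le_right ⟨N.smul_mem HO.x hwN, ?_⟩ ?_ (by omega)) inf_le_left
      · exact hW.x_smul_mem_coordFiltration (hN hwN)
      · rwa [hW.coord_succ_x_smul hlt]
    · rw [hW.coordFiltration_of_le hge]
      exact bot_le

theorem exists_eq_coordFiltration (hρ : IsSimpleRep ρ) (N : Submodule H W) :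
    ∃ l, N = hW.coordFiltration l := by
  classical
  rcases eq_or_ne N ⊥ with rfl | hN
  · exact ⟨t, (hW.coordFiltration_of_le le_rfl).symm⟩
  obtain ⟨w, hwN, hw⟩ := (Submodule.ne_bot_iff N).mp hN
  have hex : ∃ l, ∃ w ∈ N, hW.coord l w ≠ 0 := by
    by_contra! h
    exact hw (hW.eq_zero_of_coord fun j _ => h j w hwN)
  obtain ⟨w', hw'N, hw'⟩ := Nat.find_spec hex
  have hle : N ≤ hW.coordFiltration (Nat.find hex) := fun u hu =>
    hW.mem_coordFiltration.mpr fun j hj => by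
      by_contra hne
      exact Nat.find_min hex hj ⟨u, hu, hne⟩
  exact ⟨_, le_antisymm hle (hW.coordFiltration_le_of_coord_ne_zero hρ hle hw'N hw')⟩

theorem coordFiltration_covBy (hρ : IsSimpleRep ρ) {l : ℕ} (hl : l < t) :
    hW.coordFiltration (l + 1) ⋖ hW.coordFiltration l := by
  have := hρ.1
  refine ⟨hW.coordFiltration_lt hl, fun N h₁ h₂ => ?_⟩
  obtain ⟨l', rfl⟩ := hW.exists_eq_coordFiltration hρ N
  have h₁' : l' < l + 1 := lt_of_not_ge fun h => h₁.not_ge (hW.coordFiltration_antitone h)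
  have h₂' : l < l' := lt_of_not_ge fun h => h₂.not_ge (hW.coordFiltration_antitone h)
  omega

include hW in
theorem isUniserial (hρ : IsSimpleRep ρ) : IsUniserial H W := by
  intro p q
  obtain ⟨l, rfl⟩ := hW.exists_eq_coordFiltration hρ p
  obtain ⟨l', rfl⟩ := hW.exists_eq_coordFiltration hρ q
  exact (le_total l l').symm.imp (hW.coordFiltration_antitone ·) (hW.coordFiltration_antitone ·)

theorem x_smul_sectionQuot_eq_zero (l : ℕ)
    (z : sectionQuot (hW.coordFiltration (l + 1)) (hW.coordFiltration l)) : HO.x • z = 0 := by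
  obtain ⟨u, rfl⟩ := Submodule.Quotient.mk_surjective _ z
  rw [← Submodule.Quotient.mk_smul, Submodule.Quotient.mk_eq_zero, Submodule.mem_comap]
  exact hW.x_smul_mem_coordFiltration u.2

theorem isTwistIso_sectionQuot {l : ℕ} (hl : l < t) :
    IsTwistIso χ l ρ
      (resRep HO (sectionQuot (hW.coordFiltration (l + 1)) (hW.coordFiltration l))) := by
  set q := hW.coordFiltration l
  set p := Submodule.comap q.subtype (hW.coordFiltration (l + 1))
  let f : V →ₗ[k] q ⧸ p := (p.mkQ.restrictScalars k).comp <|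
    LinearMap.codRestrict (q.restrictScalars k) (HO.x ^ l • e)
      fun v => hW.xpow_smul_mem_coordFiltration le_rfl v
  have hf : ∀ v, f v = p.mkQ ⟨HO.x ^ l • e v, hW.xpow_smul_mem_coordFiltration le_rfl v⟩ :=
    fun _ => rfl
  have hinj : Function.Injective f := by
    refine (injective_iff_map_eq_zero f).mpr fun v hv => ?_
    rw [hf, Submodule.mkQ_apply, Submodule.Quotient.mk_eq_zero, Submodule.mem_comap,
      Submodule.subtype_apply, mem_coordFiltration] at hv
    simpa [hW.coord_xpow_smul hl] using hv l l.lt_succ_self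
  have hsurj : Function.Surjective f := by
    intro z
    obtain ⟨u, rfl⟩ := Submodule.Quotient.mk_surjective _ z
    refine ⟨hW.coord l u, ?_⟩
    rw [hf, Submodule.mkQ_apply, Submodule.Quotient.eq, Submodule.mem_comap]
    simpa using (hW.coordFiltration (l + 1)).neg_mem (hW.sub_xpow_smul_coord_mem u.2)
  refine ⟨LinearEquiv.ofBijective f ⟨hinj, hsurj⟩, fun g v => ?_⟩
  rw [zpow_natCast, Units.val_pow_eq_pow_val]
  change HO.emb (.of k G g) • f v = (χ g : k) ^ l • f (ρ g v)
  rw [hf, hf, ← map_smul, ← p.mkQ.map_smul_of_tower ((χ g : k) ^ l)]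
  exact congrArg p.mkQ (Subtype.ext (hW.emb_smul_xpow_smul g l v))

end IsStdQuot

theorem stmt_6_general {k G H : Type} [Field k] [Group G]
    [Ring H] [Algebra k H]
    {χ : G →* kˣ}
    (HO : HopfOre k G H χ)
    {V : Type} [AddCommGroup V] [Module k V]
    (ρ : Representation k G V) (hρ : IsSimpleRep ρ)
    {W : Type} [AddCommGroup W] [Module k W] [Module H W] [IsScalarTower k H W]
    (t : ℕ) (ht : 0 < t) (e : V →ₗ[k] W) (hW : IsStdQuot HO ρ e (HO.x ^ t) t) :
    IsIndecomposableMod H W ∧ IsUniserial H W ∧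
    ∃ cs : CompositionSeries (Submodule H W),
      cs.length = t ∧ cs 0 = ⊥ ∧ cs (Fin.last cs.length) = ⊤ ∧
      ∀ j : Fin cs.length,
        (∀ z : sectionQuot (cs j.castSucc) (cs j.succ), HO.x • z = 0) ∧
        IsTwistIso χ ((t : ℤ) - 1 - (j : ℤ)) ρ
          (resRep HO (sectionQuot (cs j.castSucc) (cs j.succ))) := by
  have : Nontrivial V := hρ.1
  have : Nontrivial W :=
    (Submodule.nontrivial_iff H).mp ⟨⟨_, _, (hW.coordFiltration_lt ht).ne⟩⟩
  let cs : CompositionSeries (Submodule H W) :=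
    ⟨t, fun i => hW.coordFiltration (t - i), fun i => by
      have hit : (i : ℕ) < t := i.isLt
      rw [Fin.val_castSucc, Fin.val_succ, show t - (i : ℕ) = t - (i + 1) + 1 by omega]
      exact hW.coordFiltration_covBy hρ (by omega)⟩
  have huni := hW.isUniserial hρ
  refine ⟨huni.isIndecomposableMod, huni, cs, rfl, hW.coordFiltration_of_le (by simp), ?_,
    fun j => ?_⟩
  · exact (congrArg hW.coordFiltration (Nat.sub_self t)).trans hW.coordFiltration_zero
  · have hjt : (j : ℕ) < t := j.isLt
    have h₁ : cs j.castSucc = hW.coordFiltration (t - 1 - j + 1) :=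
      congrArg hW.coordFiltration (by rw [Fin.val_castSucc]; omega)
    have h₂ : cs j.succ = hW.coordFiltration (t - 1 - j) :=
      congrArg hW.coordFiltration (by rw [Fin.val_succ]; omega)
    rw [h₁, h₂, show (t : ℤ) - 1 - j = ((t - 1 - j : ℕ) : ℤ) by omega]
    exact ⟨hW.x_smul_sectionQuot_eq_zero _, hW.isTwistIso_sectionQuot (by omega)⟩

/-- **Proposition 4.3.** Assume `kG` is finite-dimensional and semisimple.  For a
simple `kG`-module `V_i` and `t ≥ 1`, the `H`-module `V_t(i) = M(V_i)/x^tM(V_i)` is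
indecomposable and uniserial, its composition length is `t`, and its composition
factors are `V_{σ^l(i)}`, `l = 0, 1, …, t-1` (from top to bottom). -/
theorem stmt_6 {k G H : Type} [Field k] [IsAlgClosed k] [Group G] [Finite G]
    [Ring H] [Algebra k H]
    {χ : G →* kˣ} (a : G) (ha : a ∈ Subgroup.center G) (hχa : χ a ≠ 1)
    (hss : IsSemisimpleRing (MonoidAlgebra k G))
    (s : ℕ) (hχord : orderOf χ = s) (hq1 : 1 < orderOf (χ a)) (hqs : orderOf (χ a) ≤ s)
    (HO : HopfOre k G H χ)
    {V : Type} [AddCommGroup V] [Module k V] [FiniteDimensional k V]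
    (ρ : Representation k G V) (hρ : IsSimpleRep ρ)
    {W : Type} [AddCommGroup W] [Module k W] [Module H W] [IsScalarTower k H W]
    (t : ℕ) (ht : 0 < t) (e : V →ₗ[k] W) (hW : IsStdQuot HO ρ e (HO.x ^ t) t) :
    IsIndecomposableMod H W ∧ IsUniserial H W ∧
    ∃ cs : CompositionSeries (Submodule H W),
      cs.length = t ∧ cs 0 = ⊥ ∧ cs (Fin.last cs.length) = ⊤ ∧
      ∀ j : Fin cs.length,
        (∀ z : sectionQuot (cs j.castSucc) (cs j.succ), HO.x • z = 0) ∧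
        IsTwistIso χ ((t : ℤ) - 1 - (j : ℤ)) ρ
          (resRep HO (sectionQuot (cs j.castSucc) (cs j.succ))) :=
  stmt_6_general HO ρ hρ t ht e hW

end HopfOrePaper
end

section
/- Assume kG is finite dimensional and semisimple. Let M be a finite dimensional H-module such that every composition factor of M is isomorphic to V_i for some i ∈ I (i.e., is x-torsion). Then xM = rad(M) (the Jacobson radical of M) and M^x = soc(M) (the socle of M). -/
open scoped TensorProduct

namespace HopfOrePaper

variable {k G H : Type} [Field k] [Group G] [Ring H] [Algebra k H] {χ : G →* kˣ}

/-!
`x` normalizes `H` (`x H ⊆ H x`) and acts nilpotently on `M`, since it lowers the composition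
series. So for a maximal submodule `p`, `{m | x m ∈ p}` is a submodule containing `p`; it cannot
be `p`, since the nilpotent `x` would then act injectively on `M ⧸ p ≠ 0`, hence `x M ⊆ rad M`.
Dually `x` kills every simple submodule, so `soc M ⊆ M^x`. Conversely, `M ⧸ x M` and `M^x` are
killed by `x`, so `H = kG + H x` acts on them through `kG`; they are therefore semisimple, which
gives `rad M ⊆ x M` and `M^x ⊆ soc M`.
-/

section NilpotentNormalizingElement

variable {R M : Type} [Ring R] [AddCommGroup M] [Module R M] {x : R}

lemma pow_length_smul_eq_zero (cs : CompositionSeries (Submodule R M)) (h0 : cs 0 = ⊥)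
    (hlast : cs (Fin.last cs.length) = ⊤)
    (hstep : ∀ j : Fin cs.length, ∀ m ∈ cs j.succ, x • m ∈ cs j.castSucc) (m : M) :
    x ^ cs.length • m = 0 := by
  have key : ∀ i : Fin (cs.length + 1), ∀ m ∈ cs i, x ^ (i : ℕ) • m = 0 := by
    intro i
    induction i using Fin.induction with
    | zero => intro m hm; simpa [h0] using hm
    | succ j ih =>
      intro m hm
      rw [Fin.val_succ, pow_succ, mul_smul]
      exact ih _ (hstep j m hm)
  exact key (Fin.last _) m (hlast ▸ Submodule.mem_top)

def smulPreimage (hx : ∀ r : R, ∃ r' : R, x * r = r' * x) (p : Submodule R M) :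
    Submodule R M where
  carrier := {m | x • m ∈ p}
  add_mem' {a b} ha hb := show x • (a + b) ∈ p by rw [smul_add]; exact p.add_mem ha hb
  zero_mem' := by simp
  smul_mem' r m hm := by
    obtain ⟨r', hr'⟩ := hx r
    show x • r • m ∈ p
    rw [← mul_smul, hr', mul_smul]
    exact p.smul_mem r' hm

variable (hx : ∀ r : R, ∃ r' : R, x * r = r' * x) {n : ℕ} (hn : ∀ m : M, x ^ n • m = 0)

@[simp]
lemma mem_smulPreimage {p : Submodule R M} {m : M} : m ∈ smulPreimage hx p ↔ x • m ∈ p :=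
  Iff.rfl

include hx hn

lemma smul_mem_of_isCoatom {p : Submodule R M} (hp : IsCoatom p) (m : M) : x • m ∈ p := by
  have hle : p ≤ smulPreimage hx p := fun m hm => p.smul_mem x hm
  rcases hp.le_iff.mp hle with htop | heq
  · exact (htop ▸ Submodule.mem_top : m ∈ smulPreimage hx p)
  · have hback : ∀ i, ∀ m : M, x ^ i • m ∈ p → m ∈ p := by
      intro i
      induction i with
      | zero => simp
      | succ i ih =>
        intro m hm
        rw [pow_succ, mul_smul] at hm
        rw [← heq]
        exact ih _ hm
    exact absurd (eq_top_iff.mpr fun m _ => hback n m (by simp [hn])) hp.1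

lemma smul_eq_zero_of_isAtom {p : Submodule R M} (hp : IsAtom p) {m : M} (hm : m ∈ p) :
    x • m = 0 := by
  rcases hp.le_iff.mp (inf_le_left : p ⊓ smulPreimage hx ⊥ ≤ p) with hbot | heq
  · have hinj : ∀ i, ∀ m ∈ p, x ^ i • m = 0 → m = 0 := by
      intro i
      induction i with
      | zero => simp
      | succ i ih =>
        intro m hm h
        rw [pow_succ, mul_smul] at h
        have : m ∈ p ⊓ smulPreimage hx ⊥ := ⟨hm, by simpa using ih _ (p.smul_mem x hm) h⟩
        simpa [hbot] using this
    exact absurd (eq_bot_iff.mpr fun m hm => (Submodule.mem_bot R).mpr (hinj n m hm (hn m))) hp.1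
  · simpa using inf_eq_left.mp heq hm

lemma smulRange_le_modRadical : smulRange (M := M) R x ≤ modRadical R M :=
  Submodule.span_le.mpr <| by
    rintro _ ⟨m, rfl⟩
    exact Submodule.mem_sInf.mpr fun p hp => smul_mem_of_isCoatom hx hn hp m

lemma modSocle_le_smulPreimage_bot : modSocle R M ≤ smulPreimage hx ⊥ :=
  sSup_le fun _ hp _ hm => by simpa using smul_eq_zero_of_isAtom hx hn hp hm

end NilpotentNormalizingElement

lemma smul_eq_zero_of_quotient_smulRange {R M : Type} [Ring R] [AddCommGroup M] [Module R M]
    (x : R) (m : M ⧸ smulRange (M := M) R x) : x • m = 0 := by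
  obtain ⟨m, rfl⟩ := Submodule.Quotient.mk_surjective _ m
  rw [← Submodule.Quotient.mk_smul, Submodule.Quotient.mk_eq_zero]
  exact Submodule.subset_span ⟨m, rfl⟩

lemma le_modSocle_of_isSemisimpleModule {R M : Type} [Ring R] [AddCommGroup M] [Module R M]
    (K : Submodule R M) [IsSemisimpleModule R K] : K ≤ modSocle R M := by
  have hsimples :
      sSup {S : Submodule R K | IsSimpleModule R S} ≤ (modSocle R M).comap K.subtype :=
    sSup_le fun S hS => by
      have : IsSimpleModule R S := hS
      refine Submodule.map_le_iff_le_comap.mp (le_sSup ?_)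
      exact isSimpleModule_iff_isAtom.mp
        (IsSimpleModule.congr (S.equivMapOfInjective _ K.injective_subtype).symm)
  rw [IsSemisimpleModule.sSup_simples_eq_top] at hsimples
  exact fun m hm => hsimples (Submodule.mem_top (x := ⟨m, hm⟩))

lemma isSemisimpleModule_of_forall_exists_smul_eq {S R N : Type} [Ring S] [Ring R]
    [AddCommGroup N] [Module R N] [IsSemisimpleRing S] (φ : S →+* R)
    (hφ : ∀ r : R, ∃ s : S, ∀ n : N, r • n = φ s • n) : IsSemisimpleModule R N := by
  let : Module S N := Module.compHom N φ
  let e : Submodule R N ≃o Submodule S N :=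
    { toFun p := { p.toAddSubmonoid with smul_mem' s _ hn := p.smul_mem (φ s) hn }
      invFun q :=
        { q.toAddSubmonoid with
          smul_mem' r n hn := by
            obtain ⟨s, hs⟩ := hφ r
            rw [hs]
            exact q.smul_mem s hn }
      left_inv _ := rfl
      right_inv _ := rfl
      map_rel_iff' := Iff.rfl }
  exact (isSemisimpleModule_iff R N).mpr e.symm.complementedLattice

namespace HopfOre

variable (HO : HopfOre k G H χ)

lemma eq_top_of_basis_mem {p : Submodule k H}
    (hp : ∀ (g : G) (i : ℕ), HO.emb (MonoidAlgebra.of k G g) * HO.x ^ i ∈ p) : p = ⊤ := by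
  rw [eq_top_iff, ← HO.basis_span, Submodule.span_le]
  rintro _ ⟨⟨g, i⟩, rfl⟩
  exact hp g i

lemma exists_x_mul_eq_mul_x (h : H) : ∃ h' : H, HO.x * h = h' * HO.x := by
  have hall :
      (LinearMap.range (LinearMap.mulRight k HO.x)).comap (LinearMap.mulLeft k HO.x) = ⊤ :=
    HO.eq_top_of_basis_mem fun g i =>
      ⟨(((χ g)⁻¹ : kˣ) : k) • (HO.emb (MonoidAlgebra.of k G g) * HO.x ^ i), by
        simp only [LinearMap.mulRight_apply, LinearMap.mulLeft_apply]
        rw [← mul_assoc, HO.comm_rel, smul_mul_assoc, smul_mul_assoc, mul_assoc, mul_assoc,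
          ← pow_succ', ← pow_succ]⟩
  obtain ⟨h', hh'⟩ := Submodule.eq_top_iff'.mp hall h
  exact ⟨h', hh'.symm⟩

lemma exists_smul_eq_emb_smul {N : Type} [AddCommGroup N] [Module H N]
    (hN : ∀ n : N, HO.x • n = 0) (h : H) :
    ∃ c : MonoidAlgebra k G, ∀ n : N, h • n = HO.emb c • n := by
  have hall : LinearMap.range HO.emb.toLinearMap ⊔ LinearMap.range (LinearMap.mulRight k HO.x)
      = ⊤ :=
    HO.eq_top_of_basis_mem fun g i => by
      cases i with
      | zero => exact Submodule.mem_sup_left ⟨MonoidAlgebra.of k G g, by simp⟩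
      | succ i =>
        exact Submodule.mem_sup_right ⟨HO.emb (MonoidAlgebra.of k G g) * HO.x ^ i, by
          simp [pow_succ, mul_assoc]⟩
  obtain ⟨_, ⟨c, rfl⟩, _, ⟨h', rfl⟩, rfl⟩ :=
    Submodule.mem_sup.mp (hall ▸ Submodule.mem_top (x := h))
  exact ⟨c, fun n => by simp [add_smul, mul_smul, hN]⟩

lemma isSemisimpleModule_of_x_smul_eq_zero [IsSemisimpleRing (MonoidAlgebra k G)] {N : Type}
    [AddCommGroup N] [Module H N] (hN : ∀ n : N, HO.x • n = 0) : IsSemisimpleModule H N :=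
  isSemisimpleModule_of_forall_exists_smul_eq HO.emb.toRingHom (HO.exists_smul_eq_emb_smul hN)

end HopfOre

theorem stmt_8_general {k G H : Type} [Field k] [Group G]
    [Ring H] [Algebra k H]
    {χ : G →* kˣ}
    (hss : IsSemisimpleRing (MonoidAlgebra k G))
    (HO : HopfOre k G H χ)
    (M : Type) [AddCommGroup M] [Module H M]
    (hcf : ∃ cs : CompositionSeries (Submodule H M),
      cs 0 = ⊥ ∧ cs (Fin.last cs.length) = ⊤ ∧
      ∀ j : Fin cs.length, ∀ m ∈ cs j.succ, HO.x • m ∈ cs j.castSucc) :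
    smulRange (M := M) H HO.x = modRadical H M ∧
    (∀ m : M, HO.x • m = 0 ↔ m ∈ modSocle H M) := by
  obtain ⟨cs, h0, hlast, hstep⟩ := hcf
  have hnil := pow_length_smul_eq_zero cs h0 hlast hstep
  have hx := HO.exists_x_mul_eq_mul_x
  refine ⟨le_antisymm (smulRange_le_modRadical hx hnil) ?_, fun m => ?_⟩
  · have := HO.isSemisimpleModule_of_x_smul_eq_zero (N := M ⧸ smulRange (M := M) H HO.x)
      (smul_eq_zero_of_quotient_smulRange HO.x)
    exact Module.jacobson_le_of_eq_bot (IsSemisimpleModule.jacobson_eq_bot H _)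
  · have : IsSemisimpleModule H (smulPreimage hx (⊥ : Submodule H M)) :=
      HO.isSemisimpleModule_of_x_smul_eq_zero fun n => Subtype.ext ((Submodule.mem_bot H).mp n.2)
    exact ⟨fun hm => le_modSocle_of_isSemisimpleModule (smulPreimage hx ⊥)
        ((Submodule.mem_bot H).mpr hm),
      fun hm => by simpa using modSocle_le_smulPreimage_bot hx hnil hm⟩

/-- **Lemma 4.5.** Assume `kG` is finite-dimensional and semisimple.  Let `M` be a
finite-dimensional `H`-module each of whose composition factors is `x`-torsion
(i.e. isomorphic to some `V_i`).  Then `xM = rad(M)` and `M^x = soc(M)`. -/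
theorem stmt_8 {k G H : Type} [Field k] [IsAlgClosed k] [Group G] [Finite G]
    [Ring H] [Algebra k H]
    {χ : G →* kˣ} (a : G) (ha : a ∈ Subgroup.center G) (hχa : χ a ≠ 1)
    (hss : IsSemisimpleRing (MonoidAlgebra k G))
    (HO : HopfOre k G H χ)
    (M : Type) [AddCommGroup M] [Module k M] [Module H M] [IsScalarTower k H M]
    [FiniteDimensional k M]
    (hcf : ∃ cs : CompositionSeries (Submodule H M),
      cs 0 = ⊥ ∧ cs (Fin.last cs.length) = ⊤ ∧
      ∀ j : Fin cs.length, ∀ m ∈ cs j.succ, HO.x • m ∈ cs j.castSucc) :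
    smulRange (M := M) H HO.x = modRadical H M ∧
    (∀ m : M, HO.x • m = 0 ↔ m ∈ modSocle H M) :=
  stmt_8_general hss HO M hcf

end HopfOrePaper
end
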